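/- arXiv:1204.0224 — 12 statements merged into one kernel-verified Lean document; each statement's English description precedes it below -/
import Mathlib

section
/- Let X be a compact metric space and let φ : X → X be a continuous, surjective and open map. Then the following are equivalent: (i) φ is strongly transitive; (ii) for every x ∈ X the set ⋃_{n,m ∈ ℕ} φ^{-m}(φ^n(x)) is dense in X; (iii) for every x ∈ X the set ⋃_{n ∈ ℕ} φ^{-n}(x) is dense in X. -/
/-!
Strong transitivity gives (iii) at once, and (iii) implies (ii) trivially. For (ii) ⇒ (i), fix
a nonempty open `V`; the forward images `φ^m V` are open, so by compactness it suffices that they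
cover `X`. Otherwise `C = X \ ⋃ₘ φ^m V` is closed, nonempty and backward invariant, and by
compactness and surjectivity it contains a whole forward orbit `x, φ x, φ² x, …`. Every point of
`⋃_{n,m} φ^{-m}(φ^n x)` then lies outside `V`, contradicting density.
-/

/-- A continuous map `ψ : X → X` is strongly transitive if for every nonempty open
subset `V ⊆ X` there is `N ∈ ℕ` such that `⋃_{i=0}^N ψ^i(V) = X`. -/
def StronglyTransitive {X : Type*} [TopologicalSpace X] (ψ : X → X) : Prop :=
  ∀ V : Set X, IsOpen V → V.Nonempty →
    ∃ N : ℕ, (⋃ i ∈ Finset.range (N + 1), ψ^[i] '' V) = Set.univ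

open Set

theorem mapsTo_iUnion_image_iterate {X : Type*} (φ : X → X) (V : Set X) :
    MapsTo φ (⋃ m, φ^[m] '' V) (⋃ m, φ^[m] '' V) := by
  rintro _ ⟨_, ⟨m, rfl⟩, v, hv, rfl⟩
  exact mem_iUnion.2 ⟨m + 1, v, hv, Function.iterate_succ_apply' φ m v⟩

theorem IsOpenMap.iterate {X : Type*} [TopologicalSpace X] {φ : X → X} (ho : IsOpenMap φ) :
    ∀ n, IsOpenMap φ^[n]
  | 0 => IsOpenMap.id
  | n + 1 => (ho.iterate n).comp ho

theorem exists_biUnion_range_eq_univ {X : Type*} [TopologicalSpace X] [CompactSpace X]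
    {U : ℕ → Set X} (hU : ∀ n, IsOpen (U n)) (hcover : ⋃ n, U n = univ) :
    ∃ N, ⋃ i ∈ Finset.range (N + 1), U i = univ := by
  obtain ⟨t, ht⟩ := isCompact_univ.elim_finite_subcover U hU hcover.ge
  obtain ⟨N, htN⟩ := t.exists_nat_subset_range
  refine ⟨N, eq_univ_of_univ_subset (ht.trans ?_)⟩
  exact biUnion_subset_biUnion_left fun i hi ↦ Finset.mem_range.2 <|
    Nat.lt_succ_of_lt (Finset.mem_range.1 (htN hi))

/-- The sets `φ^{-n} C` form a decreasing sequence of nonempty compact sets. -/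
theorem exists_forall_iterate_mem_of_preimage_subset {X : Type*} [TopologicalSpace X]
    [CompactSpace X] {φ : X → X} (hc : Continuous φ) (hs : Function.Surjective φ) {C : Set X}
    (hC : IsClosed C) (hCne : C.Nonempty) (hinv : φ ⁻¹' C ⊆ C) :
    ∃ x, ∀ n, φ^[n] x ∈ C := by
  have hclosed : ∀ n, IsClosed (φ^[n] ⁻¹' C) := fun n ↦ hC.preimage (hc.iterate n)
  have hanti : ∀ n, φ^[n + 1] ⁻¹' C ⊆ φ^[n] ⁻¹' C := fun n ↦ by
    rw [Function.iterate_succ', preimage_comp]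
    exact preimage_mono hinv
  obtain ⟨x, hx⟩ := IsCompact.nonempty_iInter_of_sequence_nonempty_isCompact_isClosed _ hanti
    (fun n ↦ hCne.preimage (hs.iterate n)) (hclosed 0).isCompact hclosed
  exact ⟨x, mem_iInter.1 hx⟩

section

variable {X : Type*} [TopologicalSpace X] {φ : X → X}

theorem StronglyTransitive.dense_iUnion_preimage_iterate (h : StronglyTransitive φ) (x : X) :
    Dense (⋃ n, φ^[n] ⁻¹' {x}) := by
  refine dense_iff_inter_open.2 fun U hU hUne ↦ ?_
  obtain ⟨N, hN⟩ := h U hU hUne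
  obtain ⟨i, -, v, hvU, hvx⟩ := mem_iUnion₂.1 (hN.ge (mem_univ x))
  exact ⟨v, hvU, mem_iUnion.2 ⟨i, hvx⟩⟩

theorem stronglyTransitive_of_forall_dense [CompactSpace X] (hc : Continuous φ)
    (hs : Function.Surjective φ) (ho : IsOpenMap φ)
    (hdense : ∀ x, Dense (⋃ n, ⋃ m, φ^[m] ⁻¹' {φ^[n] x})) :
    StronglyTransitive φ := by
  intro V hV hVne
  set W := ⋃ m, φ^[m] '' V
  have hWopen : IsOpen W := isOpen_iUnion fun m ↦ ho.iterate m V hV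
  refine exists_biUnion_range_eq_univ (fun m ↦ ho.iterate m V hV) ?_
  by_contra hW
  have hinv : φ ⁻¹' Wᶜ ⊆ Wᶜ := fun y hy hyW ↦ hy (mapsTo_iUnion_image_iterate φ V hyW)
  obtain ⟨x, hx⟩ := exists_forall_iterate_mem_of_preimage_subset hc hs hWopen.isClosed_compl
    (nonempty_compl.2 hW) hinv
  obtain ⟨v, hvV, hv⟩ := (hdense x).inter_open_nonempty V hV hVne
  obtain ⟨n, m, hvm⟩ := by simpa only [mem_iUnion] using hv
  exact hx n (mem_iUnion.2 ⟨m, v, hvV, hvm⟩)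

end

theorem stmt0 {X : Type*} [MetricSpace X] [CompactSpace X] (φ : X → X)
    (hc : Continuous φ) (hs : Function.Surjective φ) (ho : IsOpenMap φ) :
    List.TFAE
      [StronglyTransitive φ,
       ∀ x : X, Dense (⋃ n : ℕ, ⋃ m : ℕ, φ^[m] ⁻¹' {φ^[n] x}),
       ∀ x : X, Dense (⋃ n : ℕ, φ^[n] ⁻¹' {x})] := by
  tfae_have 1 → 3 := StronglyTransitive.dense_iUnion_preimage_iterate
  tfae_have 3 → 2 := fun h x ↦ (h x).mono <| iUnion_subset fun m ↦
    subset_iUnion₂_of_subset 0 m subset_rfl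
  tfae_have 2 → 1 := stronglyTransitive_of_forall_dense hc hs ho
  tfae_finish
end

section
/- Let H be a compact metrizable topological group and α₀ : H → H a continuous surjective group homomorphism with finite kernel. Then α₀ is exact if and only if α₀ is strongly transitive. -/
/-- A continuous map `ψ : X → X` is exact if for every nonempty open subset
`V ⊆ X` there is `N ∈ ℕ` such that `ψ^N(V) = X`. -/
def ExactMap {X : Type*} [TopologicalSpace X] (ψ : X → X) : Prop :=
  ∀ V : Set X, IsOpen V → V.Nonempty → ∃ N : ℕ, ψ^[N] '' V = Set.univ

/-!
Exactness trivially implies strong transitivity. Conversely, for a nonempty open `V` the open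
sets `V * ker α₀ⁿ` increase with `n`; strong transitivity, applied to the open set `{g | x g⁻¹ ∈ V}`,
gives `α₀ⁱ(u) = 1` for some `u` with `x u⁻¹ ∈ V`, so every `x` lies in one of them. By compactness
one of them is all of `H`, and then `α₀ⁿ(V) = α₀ⁿ(V * ker α₀ⁿ) = α₀ⁿ(H) = H`.
-/

theorem ExactMap.stronglyTransitive {X : Type*} [TopologicalSpace X] {ψ : X → X}
    (h : ExactMap ψ) : StronglyTransitive ψ := by
  intro V hV hVne
  obtain ⟨N, hN⟩ := h V hV hVne
  refine ⟨N, Set.eq_univ_of_univ_subset ?_⟩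
  rw [← hN]
  exact Set.subset_biUnion_of_mem (u := fun i => ψ^[i] '' V) (Finset.self_mem_range_succ N)

open scoped Pointwise

namespace MonoidHom

variable {G : Type*} [Group G] (f : G →* G)

theorem monotone_iterate_preimage_one : Monotone fun n => (⇑f)^[n] ⁻¹' {1} := by
  refine monotone_nat_of_le_succ fun n x (hx : (⇑f)^[n] x = 1) => ?_
  change (⇑f)^[n + 1] x = 1
  rw [Function.iterate_succ_apply', hx, map_one]

theorem image_iterate_mul_preimage_one (s : Set G) (n : ℕ) :
    (⇑f)^[n] '' (s * (⇑f)^[n] ⁻¹' {1}) = (⇑f)^[n] '' s := by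
  refine subset_antisymm ?_ (Set.image_mono (Set.subset_mul_left s (iterate_map_one f n)))
  rintro _ ⟨_, ⟨v, hv, k, hk, rfl⟩, rfl⟩
  rw [iterate_map_mul, Set.mem_preimage.1 hk, mul_one]
  exact Set.mem_image_of_mem _ hv

theorem exists_mem_mul_iterate_preimage_one [TopologicalSpace G] [IsTopologicalGroup G]
    (hf : StronglyTransitive (f : G → G)) {V : Set G} (hV : IsOpen V) (hVne : V.Nonempty)
    (x : G) : ∃ n, x ∈ V * (⇑f)^[n] ⁻¹' {1} := by
  have hU : IsOpen ((fun g => x * g⁻¹) ⁻¹' V) := hV.preimage (by fun_prop)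
  have hUne : ((fun g => x * g⁻¹) ⁻¹' V).Nonempty := by
    obtain ⟨v, hv⟩ := hVne
    exact ⟨v⁻¹ * x, by simpa [mul_assoc] using hv⟩
  obtain ⟨N, hN⟩ := hf _ hU hUne
  have h1 : (1 : G) ∈ ⋃ i ∈ Finset.range (N + 1), (⇑f)^[i] '' ((fun g => x * g⁻¹) ⁻¹' V) :=
    hN ▸ Set.mem_univ 1
  obtain ⟨i, -, u, hu, hiu⟩ : ∃ i ≤ N, ∃ u, x * u⁻¹ ∈ V ∧ (⇑f)^[i] u = 1 := by
    simpa [Nat.lt_succ_iff] using h1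
  exact ⟨i, x * u⁻¹, hu, u, hiu, inv_mul_cancel_right x u⟩

theorem exactMap_of_stronglyTransitive [TopologicalSpace G] [IsTopologicalGroup G]
    [CompactSpace G] (hs : Function.Surjective f) (hf : StronglyTransitive (f : G → G)) :
    ExactMap (f : G → G) := by
  intro V hV hVne
  obtain ⟨n, hn⟩ := isCompact_univ.elim_directed_cover (fun n => V * (⇑f)^[n] ⁻¹' {1})
    (fun _ => hV.mul_right)
    (fun x _ => Set.mem_iUnion.2 (f.exists_mem_mul_iterate_preimage_one hf hV hVne x))
    (Monotone.directed_le fun _ _ hmn =>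
      Set.mul_subset_mul_left (f.monotone_iterate_preimage_one hmn))
  refine ⟨n, ?_⟩
  rw [← f.image_iterate_mul_preimage_one, Set.univ_subset_iff.1 hn, Set.image_univ]
  exact (hs.iterate n).range_eq

end MonoidHom

theorem stmt1_general {H : Type*} [Group H] [TopologicalSpace H] [IsTopologicalGroup H]
    [CompactSpace H]
    (α₀ : H →* H) (hs : Function.Surjective α₀) :
    ExactMap (α₀ : H → H) ↔ StronglyTransitive (α₀ : H → H) :=
  ⟨ExactMap.stronglyTransitive, α₀.exactMap_of_stronglyTransitive hs⟩

theorem stmt1 {H : Type*} [Group H] [TopologicalSpace H] [IsTopologicalGroup H]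
    [CompactSpace H] [TopologicalSpace.MetrizableSpace H]
    (α₀ : H →* H) (hc : Continuous α₀) (hs : Function.Surjective α₀)
    (hker : (α₀.ker : Set H).Finite) :
    ExactMap (α₀ : H → H) ↔ StronglyTransitive (α₀ : H → H) :=
  stmt1_general α₀ hs
end

section
/- Let H be a compact metrizable abelian topological group and α₀ : H → H a continuous group homomorphism. Then α₀ is a local homeomorphism if and only if the kernel of α₀ is finite and the quotient group H / α₀(H) is finite. -/
/-!
A continuous homomorphism of topological groups is a local homeomorphism iff it is open and
locally injective. Local injectivity of a homomorphism is discreteness of its kernel, which in a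
compact Hausdorff group means finiteness. Openness of a homomorphism out of a compact group is
openness of its (compact, hence closed) image, and a closed subgroup of a compact group is open
iff it has finite index.
-/

open Topology

theorem isLocalHomeomorph_iff_continuous_isOpenMap_isLocallyInjective {X Y : Type*}
    [TopologicalSpace X] [TopologicalSpace Y] {f : X → Y} :
    IsLocalHomeomorph f ↔ Continuous f ∧ IsOpenMap f ∧ IsLocallyInjective f := by
  refine ⟨fun hf ↦ ⟨hf.continuous, hf.isOpenMap, hf.isLocallyInjective⟩, ?_⟩
  rintro ⟨hcont, hopen, hinj⟩
  refine IsLocalHomeomorph.mk f fun x ↦ ?_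
  obtain ⟨U, hU, hxU, hinjU⟩ := hinj x
  have : Nonempty X := ⟨x⟩
  exact ⟨.ofContinuousOpenRestrict (hinjU.toPartialEquiv f U) hcont.continuousOn
    (hopen.domRestrict hU) hU, hxU, fun _ _ ↦ rfl⟩

section TopologicalGroup

variable {G H : Type*} [Group G] [TopologicalSpace G] [IsTopologicalGroup G] [Group H]

theorem MonoidHom.isLocallyInjective_iff_discreteTopology_ker (f : G →* H) :
    IsLocallyInjective f ↔ DiscreteTopology f.ker := by
  rw [discreteTopology_iff_isOpen_singleton_one]
  constructor
  · intro hinj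
    obtain ⟨U, hU, h1U, hinjU⟩ := hinj 1
    convert hU.preimage continuous_subtype_val
    ext ⟨k, hk⟩
    refine ⟨fun h ↦ by simp_all, fun hkU ↦ Subtype.ext (hinjU hkU h1U ?_)⟩
    simpa using hk
  · intro hopen
    obtain ⟨U, hU, hUker⟩ := isOpen_induced_iff.mp hopen
    have hU1 : U ∈ 𝓝 (1 : G) := hU.mem_nhds (by simpa using congrArg (1 ∈ ·) hUker)
    obtain ⟨V, hV, hVU⟩ := exists_nhds_split_inv hU1
    refine isLocallyInjective_iff_nhds.mpr fun x ↦ ⟨(x⁻¹ * ·) ⁻¹' V, ?_, fun a ha b hb hab ↦ ?_⟩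
    · exact (continuous_const_mul x⁻¹).continuousAt.preimage_mem_nhds (by simpa using hV)
    · have hker : x⁻¹ * a / (x⁻¹ * b) ∈ f.ker := by simp [MonoidHom.mem_ker, hab]
      have hone : (⟨_, hker⟩ : f.ker) ∈ ({1} : Set f.ker) := hUker ▸ hVU _ ha _ hb
      exact mul_left_cancel (div_eq_one.mp (by simpa using hone))

theorem MonoidHom.isOpenMap_iff_isOpen_range [CompactSpace G] [TopologicalSpace H] [T2Space H]
    (f : G →* H) (hf : Continuous f) : IsOpenMap f ↔ IsOpen (f.range : Set H) := by
  refine ⟨fun h ↦ f.coe_range ▸ h.isOpen_range, fun hrange ↦ ?_⟩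
  have hcont : Continuous f.rangeRestrict := hf.subtype_mk _
  have hquot : IsQuotientMap f.rangeRestrict :=
    hcont.isClosedMap.isQuotientMap hcont f.rangeRestrict_surjective
  exact hrange.isOpenMap_subtype_val.comp
    (MonoidHom.isOpenQuotientMap_of_isQuotientMap hquot).isOpenMap

variable [CompactSpace G]

theorem Subgroup.finite_iff_discreteTopology [T2Space G] (K : Subgroup G) :
    Finite K ↔ DiscreteTopology K := by
  refine ⟨fun _ ↦ inferInstance, fun _ ↦ ?_⟩
  have : CompactSpace K := isCompact_iff_compactSpace.mp K.isClosed_of_discrete.isCompact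
  exact finite_of_compact_of_discrete

theorem Subgroup.isOpen_iff_finite_quotient (K : Subgroup G) (hK : IsClosed (K : Set G)) :
    IsOpen (K : Set G) ↔ Finite (G ⧸ K) := by
  refine ⟨K.quotient_finite_of_isOpen, fun _ ↦ ?_⟩
  have : K.FiniteIndex := Subgroup.finiteIndex_of_finite_quotient
  exact K.isOpen_of_isClosed_of_finiteIndex hK

end TopologicalGroup

theorem stmt2 {H : Type*} [CommGroup H] [TopologicalSpace H] [IsTopologicalGroup H]
    [CompactSpace H] [TopologicalSpace.MetrizableSpace H]
    (α₀ : H →* H) (hc : Continuous α₀) :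
    IsLocalHomeomorph (α₀ : H → H) ↔ (Finite α₀.ker ∧ Finite (H ⧸ α₀.range)) := by
  have hrange : IsClosed (α₀.range : Set H) := α₀.coe_range ▸ (isCompact_range hc).isClosed
  rw [isLocalHomeomorph_iff_continuous_isOpenMap_isLocallyInjective,
    α₀.isLocallyInjective_iff_discreteTopology_ker, α₀.isOpenMap_iff_isOpen_range hc,
    α₀.range.isOpen_iff_finite_quotient hrange, α₀.ker.finite_iff_discreteTopology]
  tauto
end

section
/- Let A ∈ M_n(ℤ) with det A ≠ 0, let f_A(x) = det(xI − A) be its characteristic polynomial, and write f_A(x) = (1 − x)^k g(x) where k is the algebraic multiplicity of 1 as a root of f_A. If some unimodular polynomial divides g in ℤ[x], then no affine local homeomorphism of 𝕋ⁿ with linear part φ_A is strongly transitive. -/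
/-- The `n`-torus `𝕋ⁿ = (ℝ/ℤ)ⁿ`, written additively. -/
abbrev Torus (n : ℕ) := Fin n → AddCircle (1 : ℝ)

/-- For an integer matrix `A ∈ Mₙ(ℤ)`, the group endomorphism `φ_A : 𝕋ⁿ → 𝕋ⁿ`
induced on the quotient by the linear map `x ↦ Ax` on `ℝⁿ`. -/
noncomputable def phiA {n : ℕ} (A : Matrix (Fin n) (Fin n) ℤ) (x : Torus n) : Torus n :=
  fun i => ∑ j, A i j • x j

/-- A nonconstant monic integer polynomial with constant term `±1` is unimodular. -/
def IsUnimodular (p : Polynomial ℤ) : Prop :=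
  p.Monic ∧ 0 < p.natDegree ∧ (p.coeff 0 = 1 ∨ p.coeff 0 = -1)

/-!
Let `D ∈ ℤ[X]` be a factor of the unimodular divisor of `g` that is irreducible over `ℚ`, of
degree `m`. Then `D(0) = ±1`, `D(1) ≠ 0` and `D` divides the characteristic polynomial, so some
nonzero integer row vector `w` satisfies `w D(A) = 0`, and irreducibility makes
`w, w A, …, w A^{m-1}` linearly independent. The characters `χᵢ(x) = ⟨w Aⁱ, x⟩` therefore give a
surjection `Φ = (χ₀, …, χ_{m-1}) : 𝕋ⁿ → 𝕋ᵐ`, and for `T = λ + φ_A` the map `Φ ∘ T` is an affine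
function of `Φ` whose linear part is the companion matrix of `D`. As `D(1) ≠ 0` that affine map
has a fixed point `y`, and as `D(0) = ±1` it is injective; hence `T⁻¹(Φ⁻¹ y) ⊆ Φ⁻¹ y`, so the
nonempty open set `𝕋ⁿ \ Φ⁻¹ y` is forward invariant and none of its finite unions of images is
all of `𝕋ⁿ`.
-/

open Polynomial Matrix Finset

theorem Polynomial.Monic.exists_dvd_irreducible_map {R K : Type*} [CommRing R] [IsDomain R]
    [IsIntegrallyClosed R] [Field K] [Algebra R K] [IsFractionRing R K] {q : R[X]}
    (hq : q.Monic) (hdeg : 0 < q.natDegree) :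
    ∃ D : R[X], Irreducible (D.map (algebraMap R K)) ∧ D ∣ q := by
  obtain ⟨p, hpm, hp, hpq⟩ := exists_monic_irreducible_factor (q.map (algebraMap R K))
    (not_isUnit_of_natDegree_pos _ (by rwa [hq.natDegree_map]))
  obtain ⟨D, hD⟩ := IsIntegrallyClosed.eq_map_mul_C_of_dvd K hq hpq
  rw [hpm.leadingCoeff, C_1, mul_one] at hD
  have hDm : D.Monic := monic_of_injective (IsFractionRing.injective R K) (hD ▸ hpm)
  exact ⟨D, hD ▸ hp, hq.dvd_of_fraction_map_dvd_fraction_map (K := K) hDm (hD ▸ hpq)⟩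

theorem Matrix.aeval_map_algebraMap {R S n : Type*} [CommRing R] [CommRing S] [Algebra R S]
    [Fintype n] [DecidableEq n] (M : Matrix n n R) (p : R[X]) :
    aeval (M.map (algebraMap R S)) (p.map (algebraMap R S)) =
      (aeval M p).map (algebraMap R S) := by
  rw [Polynomial.aeval_map_algebraMap]
  exact aeval_algHom_apply (Algebra.ofId R S).mapMatrix M p

theorem Matrix.det_aeval_eq_zero_of_dvd_charpoly {R : Type*} [CommRing R] [IsDomain R]
    {n : Type*} [Fintype n] [DecidableEq n] {M : Matrix n n R} {p : R[X]}
    (hp : 0 < p.natDegree) (hdvd : p ∣ M.charpoly) : (aeval M p).det = 0 := by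
  let L := AlgebraicClosure (FractionRing R)
  have hf : Function.Injective (algebraMap R L) := by
    rw [IsScalarTower.algebraMap_eq R (FractionRing R) L, RingHom.coe_comp]
    exact (algebraMap (FractionRing R) L).injective.comp (IsFractionRing.injective R _)
  obtain ⟨α, hα⟩ := IsAlgClosed.exists_root (p.map (algebraMap R L))
    (by rw [degree_map_eq_of_injective hf]; exact (natDegree_pos_iff_degree_pos.mp hp).ne')
  have hspec : α ∈ spectrum L (M.map (algebraMap R L)) := by
    rw [mem_spectrum_iff_isRoot_charpoly, charpoly_map]
    exact hα.dvd (Polynomial.map_dvd _ hdvd)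
  have h0 := spectrum.subset_polynomial_aeval _ _ ⟨α, hspec, hα⟩
  rw [spectrum.zero_mem_iff, isUnit_iff_isUnit_det, isUnit_iff_ne_zero, not_not,
    Matrix.aeval_map_algebraMap, ← RingHom.mapMatrix_apply, ← RingHom.map_det] at h0
  exact hf (h0.trans (map_zero _).symm)

section CyclicVectors

variable {K : Type*} [Field K] {n : Type*} [Fintype n] [DecidableEq n] {M : Matrix n n K}
  {p : K[X]} {w : n → K}

theorem Matrix.dvd_of_vecMul_aeval_eq_zero (hp : Irreducible p) (hw : w ≠ 0)
    (hwp : w ᵥ* aeval M p = 0) {f : K[X]} (hf : w ᵥ* aeval M f = 0) : p ∣ f := by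
  by_contra hpf
  obtain ⟨a, b, hab⟩ := hp.coprime_iff_not_dvd.mpr hpf
  apply hw
  calc w = w ᵥ* aeval M (p * a + f * b) := by
        rw [mul_comm p, mul_comm f, hab, map_one, vecMul_one]
    _ = 0 := by
      rw [map_add, map_mul, map_mul, vecMul_add, ← vecMul_vecMul, ← vecMul_vecMul, hwp, hf,
        zero_vecMul, zero_vecMul, add_zero]

theorem Matrix.linearIndependent_vecMul_pow (hp : Irreducible p) (hw : w ≠ 0)
    (hwp : w ᵥ* aeval M p = 0) :
    LinearIndependent K fun i : Fin p.natDegree => w ᵥ* M ^ (i : ℕ) := by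
  rw [Fintype.linearIndependent_iff]
  intro v hv
  set f : K[X] := ∑ i : Fin p.natDegree, C (v i) * X ^ (i : ℕ)
  have hf : w ᵥ* aeval M f = 0 := by
    simpa [f, vecMul_sum, ← smul_eq_C_mul, vecMul_smul] using hv
  have hf0 : f = 0 := eq_zero_of_dvd_of_degree_lt (dvd_of_vecMul_aeval_eq_zero hp hw hwp hf)
    ((degree_sum_fin_lt v).trans_le (degree_eq_natDegree hp.ne_zero).ge)
  intro i
  simpa [f, finsetSum_coeff, coeff_C_mul_X_pow, Fin.val_inj] using congrArg (coeff · i) hf0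

end CyclicVectors

theorem LinearIndependent.of_intCast {ι n : Type*} [Fintype ι] {v : ι → n → ℤ}
    (h : LinearIndependent ℚ fun i j => (v i j : ℚ)) : LinearIndependent ℤ v := by
  rw [Fintype.linearIndependent_iff] at h ⊢
  intro g hg i
  refine Int.cast_injective (α := ℚ) (h (fun i => g i) (funext fun j => ?_) i)
  simpa using congrArg (fun u : n → ℤ => (u j : ℚ)) hg

theorem Matrix.exists_linearIndependent_vecMul_pow {n : Type*} [Fintype n] [DecidableEq n]
    {A : Matrix n n ℤ} {D : ℤ[X]} (hD : Irreducible (D.map (algebraMap ℤ ℚ)))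
    (hdvd : D ∣ A.charpoly) :
    ∃ w : n → ℤ, w ᵥ* aeval A D = 0 ∧
      LinearIndependent ℤ fun i : Fin D.natDegree => w ᵥ* A ^ (i : ℕ) := by
  let f := algebraMap ℤ ℚ
  have hdeg : (D.map f).natDegree = D.natDegree :=
    natDegree_map_eq_of_injective (RingHom.injective_int f) D
  obtain ⟨w, hw, hwD⟩ := exists_vecMul_eq_zero_iff.mpr
    (det_aeval_eq_zero_of_dvd_charpoly (hdeg ▸ hD.natDegree_pos) hdvd)
  refine ⟨w, hwD, LinearIndependent.of_intCast ?_⟩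
  have hcast : ∀ B : Matrix n n ℤ, (f ∘ w) ᵥ* B.map f = f ∘ (w ᵥ* B) :=
    fun B => funext fun i => (f.map_vecMul B w i).symm
  have hw' : f ∘ w ≠ 0 := fun h => hw (funext fun i => RingHom.injective_int f (congrFun h i))
  have hwD' : (f ∘ w) ᵥ* aeval (A.map f) (D.map f) = 0 := by
    rw [Matrix.aeval_map_algebraMap, hcast, hwD]
    rfl
  have hind := linearIndependent_vecMul_pow hD hw' hwD'
  rw [hdeg] at hind
  have hpow : ∀ k : ℕ, (f ∘ w) ᵥ* A.map f ^ k = f ∘ (w ᵥ* A ^ k) := fun k => by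
    rw [← f.mapMatrix_apply, ← map_pow, f.mapMatrix_apply, hcast]
  simp only [hpow] at hind
  exact hind

theorem Matrix.det_mul_transpose_ne_zero {R : Type*} [CommRing R] [LinearOrder R]
    [IsStrictOrderedRing R] {m n : Type*} [Fintype m] [DecidableEq m] [Fintype n]
    {C : Matrix m n R} (hC : LinearIndependent R C.row) : (C * Cᵀ).det ≠ 0 := by
  intro h
  obtain ⟨v, hv, hvC⟩ := exists_vecMul_eq_zero_iff.mpr h
  refine hv (vecMul_injective_iff.mpr hC ?_)
  show v ᵥ* C = 0 ᵥ* C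
  rw [zero_vecMul]
  apply dotProduct_self_eq_zero.mp
  calc (v ᵥ* C) ⬝ᵥ (v ᵥ* C) = (v ᵥ* (C * Cᵀ)) ⬝ᵥ v := by
        rw [← mulVec_transpose, dotProduct_mulVec, mulVec_transpose, vecMul_vecMul]
    _ = 0 := by rw [hvC, zero_dotProduct]

theorem eq_zero_of_sum_coeff_smul_eq_zero {R G : Type*} [Semiring R] [AddCommMonoid G]
    [Module R G] {D : R[X]} {u : ℕ → G} (hD0 : IsUnit (D.coeff 0))
    (hu : ∑ j ∈ range (D.natDegree + 1), D.coeff j • u j = 0)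
    (hshift : ∀ j < D.natDegree, u (j + 1) = 0) : u 0 = 0 := by
  rwa [sum_range_succ', sum_eq_zero fun j hj => by rw [hshift j (mem_range.mp hj), smul_zero],
    zero_add, hD0.smul_eq_zero] at hu

theorem exists_sub_eq_and_sum_coeff_smul_eq_zero {G : Type*} [AddCommGroup G]
    [DivisibleBy G ℤ] {D : ℤ[X]} (hD1 : D.eval 1 ≠ 0) (a : ℕ → G) :
    ∃ y : ℕ → G, (∀ i, y (i + 1) = y i - a i) ∧
      ∑ j ∈ range (D.natDegree + 1), D.coeff j • y j = 0 := by
  let s : ℕ → G := fun i => ∑ l ∈ range i, a l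
  let σ := ∑ j ∈ range (D.natDegree + 1), D.coeff j • s j
  refine ⟨fun i => DivisibleBy.div σ (D.eval 1) - s i, fun i => ?_, ?_⟩
  · simp only [s, sum_range_succ]
    abel
  · have hD : ∑ j ∈ range (D.natDegree + 1), D.coeff j = D.eval 1 := by
      simp [eval_eq_sum_range]
    simp only [smul_sub, sum_sub_distrib, ← sum_smul, hD, DivisibleBy.div_cancel _ hD1, σ,
      sub_self]

instance AddCircle.instNontrivial {p : ℝ} [Fact (0 < p)] : Nontrivial (AddCircle p) :=
  ⟨⟨((p / 2 : ℝ) : AddCircle p), 0, fun h => by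
    have hp : 0 < p := Fact.out
    rw [AddCircle.coe_eq_zero_iff_of_mem_Ico ⟨by linarith, by linarith⟩] at h
    linarith⟩⟩

noncomputable def torusChar {n : ℕ} : (Fin n → ℤ) →+ Torus n →+ AddCircle (1 : ℝ) :=
  AddMonoidHom.mk' (fun c => AddMonoidHom.mk' (fun x => ∑ j, c j • x j)
    fun x y => by simp only [Pi.add_apply, smul_add, sum_add_distrib])
    fun c d => by ext x; simp only [Pi.add_apply, add_smul, sum_add_distrib]; rfl

theorem torusChar_apply {n : ℕ} (c : Fin n → ℤ) (x : Torus n) :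
    torusChar c x = ∑ j, c j • x j := rfl

theorem continuous_torusChar {n : ℕ} (c : Fin n → ℤ) : Continuous (torusChar c) := by
  show Continuous fun x : Torus n => ∑ j, c j • x j
  exact continuous_finsetSum _ fun j _ => (continuous_zsmul (c j)).comp (continuous_apply j)

noncomputable def torusHom {m n : ℕ} (R : Matrix (Fin m) (Fin n) ℤ) : Torus n →+ Torus m :=
  AddMonoidHom.pi fun i => torusChar (R i)

theorem torusHom_apply {m n : ℕ} (R : Matrix (Fin m) (Fin n) ℤ) (x : Torus n) (i : Fin m) :
    torusHom R x i = torusChar (R i) x := rfl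

theorem continuous_torusHom {m n : ℕ} (R : Matrix (Fin m) (Fin n) ℤ) :
    Continuous (torusHom R) :=
  continuous_pi fun i => continuous_torusChar (R i)

theorem phiA_eq_torusHom {n : ℕ} (A : Matrix (Fin n) (Fin n) ℤ) : phiA A = torusHom A := rfl

theorem torusChar_torusHom {m n : ℕ} (c : Fin m → ℤ) (R : Matrix (Fin m) (Fin n) ℤ)
    (x : Torus n) : torusChar c (torusHom R x) = torusChar (c ᵥ* R) x := by
  simp only [torusChar_apply, torusHom_apply, smul_sum, smul_smul, vecMul, dotProduct, sum_smul]
  exact sum_comm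

theorem torusHom_torusHom {l m n : ℕ} (C : Matrix (Fin l) (Fin m) ℤ)
    (R : Matrix (Fin m) (Fin n) ℤ) (x : Torus n) :
    torusHom C (torusHom R x) = torusHom (C * R) x :=
  funext fun i => torusChar_torusHom (C i) R x

theorem torusHom_smul_one {m : ℕ} (d : ℤ) (x : Torus m) : torusHom (d • 1) x = d • x := by
  ext i
  simp only [torusHom_apply, torusChar_apply, Matrix.smul_apply, one_apply, Pi.smul_apply]
  simp [ite_smul]

theorem torusHom_surjective {m n : ℕ} {C : Matrix (Fin m) (Fin n) ℤ}
    (hC : LinearIndependent ℤ C.row) : Function.Surjective (torusHom C) := by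
  set G := C * Cᵀ
  -- `C` has a right inverse up to the integer `det G ≠ 0`, which is divided out on the torus.
  have hCR : C * (Cᵀ * G.adjugate) = G.det • 1 := by rw [← Matrix.mul_assoc, mul_adjugate]
  intro y
  refine ⟨torusHom (Cᵀ * G.adjugate) fun i => DivisibleBy.div (y i) G.det, ?_⟩
  rw [torusHom_torusHom, hCR, torusHom_smul_one]
  exact funext fun i => DivisibleBy.div_cancel _ (det_mul_transpose_ne_zero hC)

theorem torusChar_vecMul_aeval {n : ℕ} (w : Fin n → ℤ) (A : Matrix (Fin n) (Fin n) ℤ)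
    (D : ℤ[X]) (x : Torus n) :
    torusChar (w ᵥ* aeval A D) x =
      ∑ j ∈ range (D.natDegree + 1), D.coeff j • torusChar (w ᵥ* A ^ j) x := by
  simp_rw [aeval_eq_sum_range, vecMul_sum, vecMul_smul, map_sum, map_zsmul,
    AddMonoidHom.finsetSum_apply, AddMonoidHom.coe_smul, Pi.smul_apply]

theorem not_stronglyTransitive_of_mapsTo {X : Type*} [TopologicalSpace X] {T : X → X}
    {V : Set X} (hV : IsOpen V) (hVne : V.Nonempty) (hVuniv : V ≠ Set.univ)
    (hT : Set.MapsTo T V V) : ¬ StronglyTransitive T := by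
  intro hST
  obtain ⟨N, hN⟩ := hST V hV hVne
  exact hVuniv (Set.eq_univ_of_univ_subset
    (hN ▸ Set.iUnion₂_subset fun i _ => (hT.iterate i).image_subset))

theorem not_stronglyTransitive_of_preimage_subset {X Y : Type*} [TopologicalSpace X]
    [TopologicalSpace Y] [T1Space Y] [Nontrivial Y] {T : X → X} {Φ : X → Y}
    (hΦ : Continuous Φ) (hΦs : Function.Surjective Φ) {y : Y}
    (hT : T ⁻¹' (Φ ⁻¹' {y}) ⊆ Φ ⁻¹' {y}) : ¬ StronglyTransitive T := by
  refine not_stronglyTransitive_of_mapsTo (isClosed_singleton.preimage hΦ).isOpen_compl ?_ ?_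
    fun x hx hTx => hx (hT hTx)
  · obtain ⟨z, hz⟩ := exists_ne y
    obtain ⟨x, rfl⟩ := hΦs z
    exact ⟨x, hz⟩
  · obtain ⟨x, hx⟩ := hΦs y
    exact Set.ne_univ_iff_exists_notMem _ |>.mpr ⟨x, not_not.mpr hx⟩

theorem not_stronglyTransitive_of_vecMul_aeval_eq_zero {n : ℕ} {A : Matrix (Fin n) (Fin n) ℤ}
    {D : ℤ[X]} (hpos : 0 < D.natDegree) (hD0 : IsUnit (D.coeff 0)) (hD1 : D.eval 1 ≠ 0)
    {w : Fin n → ℤ} (hwD : w ᵥ* aeval A D = 0)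
    (hind : LinearIndependent ℤ fun i : Fin D.natDegree => w ᵥ* A ^ (i : ℕ)) (lam : Torus n) :
    ¬ StronglyTransitive fun x => lam + phiA A x := by
  let χ : ℕ → Torus n →+ AddCircle (1 : ℝ) := fun i => torusChar (w ᵥ* A ^ i)
  have hχ_shift : ∀ i x, χ i (lam + phiA A x) = χ i lam + χ (i + 1) x := fun i x => by
    rw [map_add, phiA_eq_torusHom, torusChar_torusHom, vecMul_vecMul, ← pow_succ]
  have hχ_rec : ∀ x, ∑ j ∈ range (D.natDegree + 1), D.coeff j • χ j x = 0 := fun x => by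
    rw [← torusChar_vecMul_aeval, hwD, map_zero, AddMonoidHom.zero_apply]
  -- `(y 0, …, y (m - 1))` is the fixed point of the affine map of `𝕋ᵐ` induced by `T`.
  obtain ⟨y, hy_succ, hy_rec⟩ := exists_sub_eq_and_sum_coeff_smul_eq_zero hD1 fun i => χ i lam
  have : Nonempty (Fin D.natDegree) := ⟨⟨0, hpos⟩⟩
  refine not_stronglyTransitive_of_preimage_subset (continuous_torusHom _)
    (torusHom_surjective (C := Matrix.of fun i : Fin D.natDegree => w ᵥ* A ^ (i : ℕ)) hind)
    (y := fun i => y i) fun x hTx => ?_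
  let u : ℕ → AddCircle (1 : ℝ) := fun j => χ j x - y j
  have hu_shift : ∀ j < D.natDegree, u (j + 1) = 0 := fun j hj => by
    have : χ j (lam + phiA A x) = y j := congrFun hTx ⟨j, hj⟩
    rw [hχ_shift] at this
    simp only [u, hy_succ, ← this]
    abel
  have hu0 : u 0 = 0 := eq_zero_of_sum_coeff_smul_eq_zero hD0
    (by simp only [u, smul_sub, sum_sub_distrib, hχ_rec, hy_rec, sub_self]) hu_shift
  funext ⟨i, hi⟩
  refine sub_eq_zero.mp (?_ : u i = 0)
  rcases i with _ | j
  exacts [hu0, hu_shift j (by omega)]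

theorem stmt7_general {n : ℕ} (A : Matrix (Fin n) (Fin n) ℤ)
    (k : ℕ) (g : Polynomial ℤ)
    (hfA : A.charpoly = (1 - Polynomial.X) ^ k * g) (hg1 : g.eval 1 ≠ 0)
    (hdiv : ∃ q : Polynomial ℤ, IsUnimodular q ∧ q ∣ g) :
    ∀ lam : Torus n,
      IsLocalHomeomorph (fun x : Torus n => lam + phiA A x) →
        ¬ StronglyTransitive (fun x : Torus n => lam + phiA A x) := by
  rintro lam -
  obtain ⟨q, ⟨hqm, hqdeg, hq0⟩, hqg⟩ := hdiv
  obtain ⟨D, hDirr, hDq⟩ := hqm.exists_dvd_irreducible_map (K := ℚ) hqdeg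
  have hD0 : IsUnit (D.coeff 0) := by
    refine isUnit_of_dvd_unit ?_ (Int.isUnit_iff.mpr hq0)
    simpa only [coeff_zero_eq_eval_zero] using eval_dvd hDq
  have hD1 : D.eval 1 ≠ 0 := ne_zero_of_dvd_ne_zero hg1 (eval_dvd (hDq.trans hqg))
  have hpos : 0 < D.natDegree :=
    natDegree_map_eq_of_injective (RingHom.injective_int (algebraMap ℤ ℚ)) D ▸
      hDirr.natDegree_pos
  obtain ⟨w, hwD, hind⟩ :=
    exists_linearIndependent_vecMul_pow hDirr (hfA ▸ (hDq.trans hqg).mul_left _)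
  exact not_stronglyTransitive_of_vecMul_aeval_eq_zero hpos hD0 hD1 hwD hind lam

theorem stmt7 {n : ℕ} (A : Matrix (Fin n) (Fin n) ℤ) (hA : A.det ≠ 0)
    (k : ℕ) (g : Polynomial ℤ)
    (hfA : A.charpoly = (1 - Polynomial.X) ^ k * g) (hg1 : g.eval 1 ≠ 0)
    (hdiv : ∃ q : Polynomial ℤ, IsUnimodular q ∧ q ∣ g) :
    ∀ lam : Torus n,
      IsLocalHomeomorph (fun x : Torus n => lam + phiA A x) →
        ¬ StronglyTransitive (fun x : Torus n => lam + phiA A x) :=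
  stmt7_general A k g hfA hg1 hdiv
end

section
/- Let A ∈ M_n(ℤ) with det A ≠ 0, let λ ∈ 𝕋ⁿ, and suppose the affine map T(x) = λ + φ_A(x) on 𝕋ⁿ is strongly transitive. Then the smallest closed subgroup of 𝕋ⁿ containing λ and the set {φ_A(x) − x : x ∈ 𝕋ⁿ} is all of 𝕋ⁿ. -/
/-!
An affine map `x ↦ λ + φ_A x` moves every point by an element of the closed subgroup `H` in
question, so it maps the open set `𝕋ⁿ \ H` into itself. A strongly transitive map admits no
forward-invariant open set other than `∅` and the whole space, and `0 ∈ H`, so `𝕋ⁿ \ H = ∅`.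
-/

theorem StronglyTransitive.eq_univ_of_mapsTo {X : Type*} [TopologicalSpace X] {ψ : X → X}
    (hψ : StronglyTransitive ψ) {V : Set X} (hV : IsOpen V) (hne : V.Nonempty)
    (hmaps : Set.MapsTo ψ V V) : V = Set.univ := by
  obtain ⟨N, hN⟩ := hψ V hV hne
  refine Set.eq_univ_of_univ_subset (hN ▸ ?_)
  exact Set.iUnion₂_subset fun i _ => (hmaps.iterate i).image_subset

theorem AddSubgroup.mapsTo_compl_of_sub_mem {G : Type*} [AddCommGroup G] (H : AddSubgroup G)
    {ψ : G → G} (hψ : ∀ x, ψ x - x ∈ H) : Set.MapsTo ψ (H : Set G)ᶜ (H : Set G)ᶜ := by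
  intro x hx hψx
  exact hx (sub_sub_cancel (ψ x) x ▸ H.sub_mem hψx (hψ x))

theorem StronglyTransitive.eq_top_of_sub_mem {G : Type*} [TopologicalSpace G] [AddCommGroup G]
    {ψ : G → G} (hψ : StronglyTransitive ψ) (H : AddSubgroup G) (hH : IsClosed (H : Set G))
    (hsub : ∀ x, ψ x - x ∈ H) : H = ⊤ := by
  refine (AddSubgroup.eq_top_iff' H).mpr fun x => by_contra fun hx => ?_
  have hcompl := hψ.eq_univ_of_mapsTo hH.isOpen_compl ⟨x, hx⟩ (H.mapsTo_compl_of_sub_mem hsub)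
  exact (Set.eq_univ_iff_forall.mp hcompl 0) H.zero_mem

theorem stmt8_general {n : ℕ} (A : Matrix (Fin n) (Fin n) ℤ)
    (lam : Torus n)
    (hst : StronglyTransitive (fun x : Torus n => lam + phiA A x)) :
    AddSubgroup.topologicalClosure
      (AddSubgroup.closure (insert lam {y : Torus n | ∃ x : Torus n, y = phiA A x - x})) = ⊤ := by
  set S := AddSubgroup.closure (insert lam {y : Torus n | ∃ x : Torus n, y = phiA A x - x})
  have hlam : lam ∈ S := AddSubgroup.subset_closure (Set.mem_insert _ _)
  have hphi (x : Torus n) : phiA A x - x ∈ S :=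
    AddSubgroup.subset_closure (Set.mem_insert_of_mem _ ⟨x, rfl⟩)
  refine hst.eq_top_of_sub_mem _ S.isClosed_topologicalClosure fun x => ?_
  rw [add_sub_assoc]
  exact S.le_topologicalClosure (S.add_mem hlam (hphi x))

theorem stmt8 {n : ℕ} (A : Matrix (Fin n) (Fin n) ℤ) (hA : A.det ≠ 0)
    (lam : Torus n)
    (hst : StronglyTransitive (fun x : Torus n => lam + phiA A x)) :
    AddSubgroup.topologicalClosure
      (AddSubgroup.closure (insert lam {y : Torus n | ∃ x : Torus n, y = phiA A x - x})) = ⊤ :=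
  stmt8_general A lam hst
end

section
/- Let φ : 𝕋 → 𝕋 be a local homeomorphism of the circle 𝕋 = ℝ/ℤ of degree d with |d| ≥ 2, and assume φ is strongly transitive. Then φ is topologically conjugate to the endomorphism m_d induced by t ↦ dt on ℝ, i.e. there is a homeomorphism h of 𝕋 with h ∘ φ = m_d ∘ h. -/
/-!
Since `φ` is a local homeomorphism, so is its lift `g`; an open continuous map of `ℝ` is injective,
hence `g` is strictly monotone or antitone, with the sign of `d`. As `g x - d x` is periodic, hence
bounded, `g^[n] / d ^ n` converges uniformly (this is where `|d| ≥ 2` enters) to a continuous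
monotone `H` with `H (x + 1) = H x + 1` and `H ∘ g = d • H`, which descends to a continuous
surjection `h` of the circle with `h ∘ φ = m_d ∘ h`. If `H` were constant on an interval `I`, the
finitely many images `φ^[i] I` covering the circle would make the range of `h` finite; so `H` is
strictly monotone and `h` is a homeomorphism.
-/

open Set Function Filter Topology

local notation "𝕋" => AddCircle (1 : ℝ)

theorem IsOpenMap.injective_of_continuous {α β : Type*} [ConditionallyCompleteLinearOrder α]
    [DenselyOrdered α] [TopologicalSpace α] [OrderTopology α] [LinearOrder β] [TopologicalSpace β]
    [OrderTopology β] [DenselyOrdered β] [NoMinOrder β] [NoMaxOrder β] {f : α → β}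
    (hf : IsOpenMap f) (hc : Continuous f) : Injective f := by
  intro a b hab
  by_contra hne
  wlog hlt : a < b generalizing a b
  · exact this hab.symm (Ne.symm hne) ((Ne.symm hne).lt_of_le (not_lt.1 hlt))
  obtain ⟨c, -, hextr⟩ := exists_isLocalExtr_Ioo hlt hc.continuousOn hab
  exact (isLocalExtrOn_univ_iff.2 hextr).not_nhds_le_map (by simpa using hf.nhds_le c)

theorem StronglyTransitive.finite_range_of_semiconj {X Y : Type*} [TopologicalSpace X]
    {ψ : X → X} {χ : Y → Y} {h : X → Y} (hst : StronglyTransitive ψ) (hsc : Semiconj h ψ χ)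
    {V : Set X} (hV : IsOpen V) (hne : V.Nonempty) (hfin : (h '' V).Finite) :
    (range h).Finite := by
  obtain ⟨N, hN⟩ := hst V hV hne
  refine ((Finset.range (N + 1)).finite_toSet.biUnion fun i _ => hfin.image χ^[i]).subset ?_
  rintro _ ⟨x, rfl⟩
  obtain ⟨i, hi, v, hv, rfl⟩ := mem_iUnion₂.1 (hN.symm ▸ mem_univ x)
  exact mem_iUnion₂.2 ⟨i, hi, h v, mem_image_of_mem h hv, ((hsc.iterate_right i) v).symm⟩

def IsLiftOfDegree (g : ℝ → ℝ) (d : ℤ) : Prop :=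
  ∀ x, g (x + 1) = g x + d

noncomputable def linearizationTerm (g : ℝ → ℝ) (d : ℤ) (n : ℕ) (x : ℝ) : ℝ :=
  (g (g^[n] x) - d * g^[n] x) / (d : ℝ) ^ (n + 1)

/-- The limit of `g^[n] x / d ^ n`, written as the telescoping series of its increments. -/
noncomputable def linearization (g : ℝ → ℝ) (d : ℤ) (x : ℝ) : ℝ :=
  x + ∑' n, linearizationTerm g d n x

theorem iterate_div_pow_eq_add_sum (g : ℝ → ℝ) {d : ℤ} (hd : d ≠ 0) (n : ℕ) (x : ℝ) :
    g^[n] x / (d : ℝ) ^ n = x + ∑ k ∈ Finset.range n, linearizationTerm g d k x := by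
  induction n with
  | zero => simp
  | succ n ih =>
    rw [Finset.sum_range_succ, ← add_assoc, ← ih, linearizationTerm, iterate_succ_apply']
    field_simp
    ring

namespace IsLiftOfDegree

variable {g : ℝ → ℝ} {d : ℤ}

theorem periodic_sub_mul (h : IsLiftOfDegree g d) : Periodic (fun x => g x - d * x) 1 :=
  fun x => by simp only [h x]; ring

theorem add_intCast (h : IsLiftOfDegree g d) (k : ℤ) (x : ℝ) : g (x + k) = g x + d * k := by
  have := h.periodic_sub_mul.int_mul k x
  simp only [mul_one] at this
  linarith

theorem comp {f : ℝ → ℝ} {e : ℤ} (h : IsLiftOfDegree g d) (hf : IsLiftOfDegree f e) :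
    IsLiftOfDegree (g ∘ f) (d * e) := fun x => by
  simp only [comp_apply, hf x, h.add_intCast, Int.cast_mul]

theorem iterate (h : IsLiftOfDegree g d) (n : ℕ) : IsLiftOfDegree g^[n] (d ^ n) := by
  induction n with
  | zero => intro x; simp
  | succ n ih => rw [iterate_succ', pow_succ']; exact h.comp ih

theorem exists_abs_sub_mul_le (h : IsLiftOfDegree g d) (hc : Continuous g) :
    ∃ C, ∀ x, |g x - d * x| ≤ C := by
  obtain ⟨C, hC⟩ := isBounded_iff_forall_norm_le.1
    (h.periodic_sub_mul.isBounded_of_continuous one_ne_zero (by fun_prop))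
  exact ⟨C, fun x => hC _ ⟨x, rfl⟩⟩

theorem exists_summable_bound (h : IsLiftOfDegree g d) (hc : Continuous g) (hd : 1 < |d|) :
    ∃ u : ℕ → ℝ, Summable u ∧ ∀ n x, ‖linearizationTerm g d n x‖ ≤ u n := by
  obtain ⟨C, hC⟩ := h.exists_abs_sub_mul_le hc
  have hd' : 1 < |(d : ℝ)| := by rw [← Int.cast_abs]; exact_mod_cast hd
  refine ⟨fun n => C * |(d : ℝ)|⁻¹ ^ (n + 1), ?_, fun n x => ?_⟩
  · exact ((summable_geometric_of_lt_one (by positivity) (inv_lt_one_of_one_lt₀ hd')).mul_left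
      (C * |(d : ℝ)|⁻¹)).congr fun n => by ring
  · rw [linearizationTerm, Real.norm_eq_abs, abs_div, abs_pow]
    show _ ≤ C * _
    rw [inv_pow, ← div_eq_mul_inv]
    exact div_le_div_of_nonneg_right (hC _) (by positivity)

theorem continuous_linearization (h : IsLiftOfDegree g d) (hc : Continuous g) (hd : 1 < |d|) :
    Continuous (linearization g d) := by
  obtain ⟨u, hu, hbound⟩ := h.exists_summable_bound hc hd
  exact continuous_id.add
    (continuous_tsum (fun n => by unfold linearizationTerm; fun_prop) hu hbound)

theorem tendsto_iterate_div_pow (h : IsLiftOfDegree g d) (hc : Continuous g) (hd : 1 < |d|)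
    (x : ℝ) : Tendsto (fun n => g^[n] x / (d : ℝ) ^ n) atTop (𝓝 (linearization g d x)) := by
  obtain ⟨u, hu, hbound⟩ := h.exists_summable_bound hc hd
  have hsum := (hu.of_norm_bounded fun n => hbound n x).hasSum.tendsto_sum_nat
  simp_rw [iterate_div_pow_eq_add_sum g (abs_pos.1 (one_pos.trans hd))]
  exact hsum.const_add x

theorem isLiftOfDegree_linearization (h : IsLiftOfDegree g d) (hc : Continuous g)
    (hd : 1 < |d|) : IsLiftOfDegree (linearization g d) 1 := fun x => by
  have hd0 : (d : ℝ) ≠ 0 := Int.cast_ne_zero.2 (abs_pos.1 (one_pos.trans hd))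
  rw [Int.cast_one]
  refine tendsto_nhds_unique (h.tendsto_iterate_div_pow hc hd (x + 1)) ?_
  refine ((h.tendsto_iterate_div_pow hc hd x).add_const 1).congr fun n => ?_
  rw [h.iterate n x]
  push_cast
  field_simp

theorem linearization_apply (h : IsLiftOfDegree g d) (hc : Continuous g) (hd : 1 < |d|)
    (x : ℝ) : linearization g d (g x) = d * linearization g d x := by
  have hd0 : (d : ℝ) ≠ 0 := Int.cast_ne_zero.2 (abs_pos.1 (one_pos.trans hd))
  refine tendsto_nhds_unique (h.tendsto_iterate_div_pow hc hd (g x)) ?_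
  have := ((h.tendsto_iterate_div_pow hc hd x).comp (tendsto_add_atTop_nat 1)).const_mul (d : ℝ)
  refine this.congr fun n => ?_
  simp only [comp_apply, iterate_succ_apply, pow_succ]
  field_simp

theorem monotone_iterate_div_pow (h : IsLiftOfDegree g d) (hd : d ≠ 0)
    (hg : Monotone g ∨ Antitone g) (n : ℕ) : Monotone fun x => g^[n] x / (d : ℝ) ^ n := by
  have h01 : g 1 = g 0 + d := by simpa using h 0
  induction n with
  | zero => intro a b hab; simpa using hab
  | succ n ih =>
    have hstep : (fun x => g^[n + 1] x / (d : ℝ) ^ (n + 1)) = fun x => g^[n] (g x) / d ^ n / d := by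
      funext x; rw [iterate_succ_apply, pow_succ, div_div]
    rw [hstep]
    rcases hg with hm | ha
    · have : (0 : ℝ) ≤ d := by linarith [hm zero_le_one]
      exact (ih.comp hm).div_const this
    · have : (d : ℝ) < 0 := lt_of_le_of_ne (by linarith [ha zero_le_one]) (Int.cast_ne_zero.2 hd)
      exact fun a b hab => (div_le_div_right_of_neg this).2 (ih.comp_antitone ha hab)

theorem monotone_linearization (h : IsLiftOfDegree g d) (hc : Continuous g) (hd : 1 < |d|)
    (hg : Monotone g ∨ Antitone g) : Monotone (linearization g d) := fun a b hab =>
  le_of_tendsto_of_tendsto' (h.tendsto_iterate_div_pow hc hd a) (h.tendsto_iterate_div_pow hc hd b)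
    fun n => h.monotone_iterate_div_pow (abs_pos.1 (one_pos.trans hd)) hg n hab

theorem surjective_of_one (h : IsLiftOfDegree g 1) (hc : Continuous g) : Surjective g := by
  intro r
  have hgk (k : ℤ) : g k = g 0 + k := by simpa using h.add_intCast k 0
  set k := ⌊r - g 0⌋
  have hk : r ∈ Icc (g k) (g (k + 1 : ℤ)) := by
    rw [hgk, hgk, Int.cast_add, Int.cast_one]
    constructor <;> linarith [Int.floor_le (r - g 0), Int.lt_floor_add_one (r - g 0)]
  obtain ⟨x, -, hx⟩ := intermediate_value_Icc (by simp) hc.continuousOn hk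
  exact ⟨x, hx⟩

theorem periodic_coe (h : IsLiftOfDegree g d) : Periodic (fun x => (g x : 𝕋)) 1 :=
  fun x => by simp [h x]

noncomputable def circleMap (h : IsLiftOfDegree g d) : 𝕋 → 𝕋 :=
  h.periodic_coe.lift

theorem circleMap_coe (h : IsLiftOfDegree g d) (x : ℝ) : h.circleMap x = g x :=
  rfl

theorem continuous_circleMap (h : IsLiftOfDegree g d) (hc : Continuous g) :
    Continuous h.circleMap :=
  Continuous.quotient_liftOn' ((AddCircle.continuous_mk' 1).comp hc) _

theorem surjective_circleMap (h : IsLiftOfDegree g 1) (hc : Continuous g) :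
    Surjective h.circleMap := by
  rintro ⟨r⟩
  obtain ⟨x, rfl⟩ := h.surjective_of_one hc r
  exact ⟨x, rfl⟩

theorem injective_circleMap (h : IsLiftOfDegree g 1) (hinj : Injective g) :
    Injective h.circleMap := by
  rintro ⟨x⟩ ⟨y⟩ hxy
  obtain ⟨k, hk⟩ := AddSubgroup.mem_zmultiples_iff.1 (QuotientAddGroup.eq.1 hxy)
  rw [zsmul_eq_mul, mul_one] at hk
  have : x + k = y := hinj (by rw [h.add_intCast, Int.cast_one, one_mul]; linarith)
  exact QuotientAddGroup.eq.2 ⟨k, show k • (1 : ℝ) = -x + y by rw [zsmul_eq_mul, mul_one]; linarith⟩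

theorem injective_of_stronglyTransitive (h : IsLiftOfDegree g 1) (hc : Continuous g)
    (hm : Monotone g) {φ χ : 𝕋 → 𝕋} (hst : StronglyTransitive φ)
    (hsc : Semiconj h.circleMap φ χ) : Injective g := by
  suffices ∀ u v, u < v → g u ≠ g v from fun a b hab =>
    by_contra fun hne => (Ne.lt_or_gt hne).elim (this a b · hab) (this b a · hab.symm)
  intro u v huv hguv
  have hfin := hst.finite_range_of_semiconj hsc (QuotientAddGroup.isOpenMap_coe _ isOpen_Ioo)
    ((nonempty_Ioo.2 huv).image _) ((finite_singleton (g u : 𝕋)).subset ?_)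
  · have : Infinite 𝕋 := (AddCircle.equivIco 1 0).infinite_iff.2 (Ico.infinite (by norm_num))
    exact infinite_univ ((h.surjective_circleMap hc).range_eq ▸ hfin)
  · rintro _ ⟨_, ⟨w, hw, rfl⟩, rfl⟩
    rw [mem_singleton_iff, circleMap_coe,
      le_antisymm (hguv ▸ hm hw.2.le) (hm hw.1.le)]

end IsLiftOfDegree

theorem stmt9 (φ : AddCircle (1 : ℝ) → AddCircle (1 : ℝ))
    (hloc : IsLocalHomeomorph φ)
    (d : ℤ) (hd : 2 ≤ |d|)
    (g : ℝ → ℝ) (hg : Continuous g)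
    (hlift : ∀ t : ℝ, φ (↑t : AddCircle (1 : ℝ)) = ((g t : ℝ) : AddCircle (1 : ℝ)))
    (hdeg : ∀ t : ℝ, g (t + 1) = g t + d)
    (hst : StronglyTransitive φ) :
    ∃ h : AddCircle (1 : ℝ) ≃ₜ AddCircle (1 : ℝ),
      ∀ x : AddCircle (1 : ℝ), h (φ x) = d • h x := by
  have hdeg : IsLiftOfDegree g d := hdeg
  have hd : 1 < |d| := by linarith
  have hgloc : IsLocalHomeomorph g := by
    have hcomm : ((↑) : ℝ → 𝕋) ∘ g = φ ∘ (↑) := funext fun t => (hlift t).symm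
    exact .of_comp (hcomm ▸ hloc.comp (AddCircle.isLocalHomeomorph_coe 1))
      (AddCircle.isLocalHomeomorph_coe 1) hg
  have hgmono : Monotone g ∨ Antitone g :=
    (hg.strictMono_of_inj (hgloc.isOpenMap.injective_of_continuous hg)).imp
      StrictMono.monotone StrictAnti.antitone
  have hH := hdeg.isLiftOfDegree_linearization hg hd
  have hHc := hdeg.continuous_linearization hg hd
  have hsemi : Semiconj hH.circleMap φ (d • ·) := by
    intro x
    induction x using QuotientAddGroup.induction_on with
    | H t =>
      rw [hlift, hH.circleMap_coe, hH.circleMap_coe, hdeg.linearization_apply hg hd,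
        ← zsmul_eq_mul, AddCircle.coe_zsmul]
  have hHinj := hH.injective_of_stronglyTransitive hHc (hdeg.monotone_linearization hg hd hgmono)
    hst hsemi
  exact ⟨(hH.continuous_circleMap hHc).homeoOfEquivCompactToT2
    (f := .ofBijective _ ⟨hH.injective_circleMap hHinj, hH.surjective_circleMap hHc⟩), hsemi⟩
end

section
/- Let n ≥ 1 and let μ : M_n(ℤ) → ℤ be a map such that μ(AB) = μ(A)μ(B) for all A, B ∈ M_n(ℤ) and μ(D) = det D for every diagonal matrix D ∈ M_n(ℤ). Then μ(A) = det A for all A ∈ M_n(ℤ). -/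
/-!
Over `ℚ` every matrix is a product of diagonal matrices and transvections. Clearing
denominators, some nonzero multiple `k • A` of an integer matrix `A` is therefore a product of
integer matrices of two kinds: diagonal ones, on which `μ = det` by hypothesis, and integral
multiples of rational transvections, which factor as `D * transvection i j p * D'` with `D`, `D'`
diagonal. On integer transvections `μ = 1`: conjugating `transvection i j p` by a diagonal matrix
of determinant `2` gives `transvection i j (2 * p)`, the square of `transvection i j p`, so
`μ (transvection i j p)` is an idempotent unit of `ℤ`. Hence `μ (k • A) = det (k • A)`, and
cancelling `k ^ n` from both sides gives `μ A = det A`.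
-/

namespace Matrix

variable {m : Type*} [Fintype m] [DecidableEq m]

theorem transvection_mul_diagonal_update {R : Type*} [CommRing R] {i j : m} (hij : i ≠ j)
    (p t : R) :
    transvection i j p * diagonal (Function.update 1 j t) =
      diagonal (Function.update 1 j t) * transvection i j (t * p) := by
  ext a b
  rw [mul_diagonal, diagonal_mul]
  simp only [transvection, add_apply, one_apply, single_apply, Function.update_apply,
    Pi.one_apply]
  split_ifs <;> grind

theorem diagonal_const_add_single_eq {R : Type*} [CommRing R] {i j : m} (hij : i ≠ j) (k p : R) :
    diagonal (fun _ => k) + single i j p =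
      diagonal (Function.update (fun _ => k) i 1) * transvection i j p *
        diagonal (Function.update 1 i k) := by
  ext a b
  rw [mul_diagonal, diagonal_mul]
  simp only [transvection, add_apply, diagonal_apply, one_apply, single_apply,
    Function.update_apply, Pi.one_apply]
  split_ifs <;> grind

omit [DecidableEq m] in
theorem exists_map_intCast_eq_smul (B : Matrix m m ℚ) :
    ∃ k : ℤ, k ≠ 0 ∧ ∃ C : Matrix m m ℤ, C.map (↑) = (k : ℚ) • B := by
  obtain ⟨⟨k, hk⟩, hC⟩ :=
    IsLocalization.exist_integer_multiples_of_finite (nonZeroDivisors ℤ) fun p : m × m => B p.1 p.2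
  choose C hC using hC
  exact ⟨k, nonZeroDivisors.ne_zero hk, of fun i j => C (i, j), by ext i j; simpa using hC (i, j)⟩

omit [Fintype m] in
theorem eq_diagonal_const_add_single_of_map_eq_smul_transvection {i j : m} (hij : i ≠ j) {c : ℚ}
    {k : ℤ} {C : Matrix m m ℤ} (hC : C.map (↑) = (k : ℚ) • transvection i j c) :
    C = diagonal (fun _ => k) + single i j (C i j) := by
  have hCij : (C i j : ℚ) = k * c := by
    simpa [transvection, single_apply, hij] using congr_fun₂ hC i j
  refine map_injective Int.cast_injective (hC.trans ?_)
  ext a b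
  simp only [map_apply, add_apply, smul_apply, transvection, one_apply, diagonal_apply,
    single_apply, smul_eq_mul]
  split_ifs <;> grind

section

variable (f : Matrix m m ℤ →* ℤ) (hf : ∀ d, f (diagonal d) = (diagonal d).det)
include hf

theorem map_smul_eq_pow_card_mul (k : ℤ) (A : Matrix m m ℤ) :
    f (k • A) = k ^ Fintype.card m * f A := by
  rw [smul_eq_diagonal_mul, map_mul, hf, det_diagonal, Finset.prod_const, Finset.card_univ]

theorem map_transvection_eq_one {i j : m} (hij : i ≠ j) (p : ℤ) : f (transvection i j p) = 1 := by
  have hdet : f (diagonal (Function.update 1 j 2)) = 2 := by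
    rw [hf, det_diagonal, Finset.prod_update_of_mem (Finset.mem_univ j)]
    simp
  have hidem : f (transvection i j p) * f (transvection i j p) = f (transvection i j p) := by
    have h := congr_arg f (transvection_mul_diagonal_update hij p 2)
    rw [map_mul, map_mul, hdet, two_mul p, ← transvection_mul_transvection_same _ _ hij,
      map_mul] at h
    linarith
  have hinv : f (transvection i j p) * f (transvection i j (-p)) = 1 := by
    rw [← map_mul, transvection_mul_transvection_same _ _ hij, add_neg_cancel, transvection_zero,
      map_one]
  calc f (transvection i j p)
      = f (transvection i j p) * (f (transvection i j p) * f (transvection i j (-p))) := by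
        rw [hinv, mul_one]
    _ = f (transvection i j p) * f (transvection i j (-p)) := by rw [← mul_assoc, hidem]
    _ = 1 := hinv

theorem exists_mem_eqLocusM_map_eq_smul (B : Matrix m m ℚ) :
    ∃ k : ℤ, k ≠ 0 ∧ ∃ C ∈ f.eqLocusM detMonoidHom, C.map (↑) = (k : ℚ) • B := by
  have hdiag_mem (d : m → ℤ) : diagonal d ∈ f.eqLocusM detMonoidHom := hf d
  induction B using diagonal_transvection_induction with
  | hdiag d =>
    obtain ⟨k, hk, C, hC⟩ := exists_map_intCast_eq_smul (diagonal d)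
    have hCdiag : C.IsDiag := fun a b hab => by
      have h := congr_fun₂ hC a b
      simp only [map_apply, smul_apply, diagonal_apply_ne _ hab, smul_zero] at h
      exact_mod_cast h
    exact ⟨k, hk, C, hCdiag.diagonal_diag ▸ hdiag_mem _, hC⟩
  | htransvec t =>
    obtain ⟨i, j, hij, c⟩ := t
    obtain ⟨k, hk, C, hC⟩ := exists_map_intCast_eq_smul (transvection i j c)
    have htransvec_mem : transvection i j (C i j) ∈ f.eqLocusM detMonoidHom := by
      rw [MonoidHom.mem_eqLocusM, map_transvection_eq_one f hf hij, coe_detMonoidHom,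
        det_transvection_of_ne _ _ hij]
    refine ⟨k, hk, C, ?_, hC⟩
    rw [eq_diagonal_const_add_single_of_map_eq_smul_transvection hij hC,
      diagonal_const_add_single_eq hij k]
    exact mul_mem (mul_mem (hdiag_mem _) htransvec_mem) (hdiag_mem _)
  | hmul B₁ B₂ h₁ h₂ =>
    obtain ⟨k₁, hk₁, C₁, hC₁, hB₁⟩ := h₁
    obtain ⟨k₂, hk₂, C₂, hC₂, hB₂⟩ := h₂
    refine ⟨k₁ * k₂, mul_ne_zero hk₁ hk₂, C₁ * C₂, mul_mem hC₁ hC₂, ?_⟩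
    rw [Int.cast_mul, ← smul_mul_smul_comm, ← hB₁, ← hB₂]
    simpa using Matrix.map_mul (L := C₁) (M := C₂) (f := Int.castRingHom ℚ)

theorem eq_detMonoidHom_of_map_diagonal : f = detMonoidHom := by
  ext A
  obtain ⟨k, hk, C, hC, hCA⟩ := exists_mem_eqLocusM_map_eq_smul f hf (A.map (↑))
  obtain rfl : C = k • A := map_injective Int.cast_injective (by
    ext i j
    have h := congr_fun₂ hCA i j
    simp only [map_apply, smul_apply, smul_eq_mul] at h ⊢
    exact_mod_cast h)
  rw [MonoidHom.mem_eqLocusM, map_smul_eq_pow_card_mul f hf, coe_detMonoidHom, det_smul] at hC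
  exact mul_left_cancel₀ (pow_ne_zero _ hk) hC

end

end Matrix

theorem stmt10_general {n : ℕ} (μ : Matrix (Fin n) (Fin n) ℤ → ℤ)
    (hmul : ∀ A B : Matrix (Fin n) (Fin n) ℤ, μ (A * B) = μ A * μ B)
    (hdiag : ∀ d : Fin n → ℤ, μ (Matrix.diagonal d) = (Matrix.diagonal d).det) :
    ∀ A : Matrix (Fin n) (Fin n) ℤ, μ A = A.det := by
  let f : Matrix (Fin n) (Fin n) ℤ →* ℤ :=
    { toFun := μ
      map_one' := by simpa using hdiag 1
      map_mul' := hmul }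
  exact DFunLike.congr_fun (Matrix.eq_detMonoidHom_of_map_diagonal f hdiag)

theorem stmt10 {n : ℕ} (hn : 1 ≤ n) (μ : Matrix (Fin n) (Fin n) ℤ → ℤ)
    (hmul : ∀ A B : Matrix (Fin n) (Fin n) ℤ, μ (A * B) = μ A * μ B)
    (hdiag : ∀ d : Fin n → ℤ, μ (Matrix.diagonal d) = (Matrix.diagonal d).det) :
    ∀ A : Matrix (Fin n) (Fin n) ℤ, μ A = A.det :=
  stmt10_general μ hmul hdiag
end

section
/- Let μ : M₂(ℤ) → M₂(ℤ) be a map such that μ(AB) = μ(A)μ(B) for all A, B ∈ M₂(ℤ) and μ(D) = D for every diagonal matrix D ∈ M₂(ℤ). Then either μ(A) = A for all A ∈ M₂(ℤ), or μ(A) = WAW for all A ∈ M₂(ℤ), where W is the diagonal matrix with diagonal entries (−1, 1). -/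
/-!
With `E i j` the matrix units, multiplicativity and the diagonal idempotents `E i i` force `μ`
to act entrywise: `μ A i j = μ (E i i * A * E j j) i j` and
`E i i * A * E j j = diag(A i j at i) * E i j`, so `μ A = A ⊙ c` with `c i j` the `(i, j)` entry
of `μ (E i j)`. Then `E i j * E j k = E i k` makes `c` a multiplicative cocycle with `c i i = 1`.
For `2 × 2` integer matrices this leaves `c 0 1 = c 1 0 = ±1`: the identity, or conjugation by
`diag(-1, 1)`.
-/

open Matrix

namespace Matrix

variable {n R : Type*} [DecidableEq n] [CommSemiring R]

def entryScale (μ : Matrix n n R → Matrix n n R) : Matrix n n R :=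
  of fun i j => μ (single i j 1) i j

variable {μ : Matrix n n R → Matrix n n R}

theorem entryScale_apply_self (hdiag : ∀ d, μ (diagonal d) = diagonal d) (i : n) :
    entryScale μ i i = 1 := by
  simp [entryScale, ← diagonal_single, hdiag]

variable [Fintype n]

theorem apply_eq_mul_entryScale (hmul : ∀ A B, μ (A * B) = μ A * μ B)
    (hdiag : ∀ d, μ (diagonal d) = diagonal d) (A : Matrix n n R) (i j : n) :
    μ A i j = A i j * entryScale μ i j := by
  have hsingle : ∀ k, μ (single k k 1) = single k k 1 := fun k => by
    rw [← diagonal_single, hdiag]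
  have hcorner :
      single i i 1 * A * single j j 1 = diagonal (Pi.single i (A i j)) * single i j 1 := by
    rw [single_mul_mul_single, diagonal_single, single_mul_single_same, one_mul, mul_one]
  have h := congr($(congrArg μ hcorner) i j)
  rw [hmul, hmul, hmul, hsingle, hsingle, hdiag] at h
  simpa [entryScale] using h

theorem eq_hadamard_entryScale (hmul : ∀ A B, μ (A * B) = μ A * μ B)
    (hdiag : ∀ d, μ (diagonal d) = diagonal d) (A : Matrix n n R) :
    μ A = A ⊙ entryScale μ :=
  ext (apply_eq_mul_entryScale hmul hdiag A)

theorem entryScale_mul_entryScale (hmul : ∀ A B, μ (A * B) = μ A * μ B)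
    (hdiag : ∀ d, μ (diagonal d) = diagonal d) (i j k : n) :
    entryScale μ i j * entryScale μ j k = entryScale μ i k := by
  have hE : ∀ a b, μ (single a b 1) = single a b (entryScale μ a b) := fun a b => by
    rw [eq_hadamard_entryScale hmul hdiag]
    ext k l
    rw [hadamard_apply, single_apply, single_apply]
    split_ifs with hkl
    · obtain ⟨rfl, rfl⟩ := hkl
      rw [one_mul]
    · rw [zero_mul]
  have h := congrArg μ (single_mul_single_same (1 : R) i j k 1)
  rw [hmul, hE, hE, single_mul_single_same, one_mul, hE] at h
  simpa using congr($h i k)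

theorem hadamard_of_mul_eq_diagonal_mul_mul_diagonal (A : Matrix n n R) (w : n → R) :
    A ⊙ of (fun i j => w i * w j) = diagonal w * A * diagonal w := by
  ext i j
  simp [diagonal_mul, mul_diagonal]
  ring

theorem entryScale_fin_two {μ : Matrix (Fin 2) (Fin 2) ℤ → Matrix (Fin 2) (Fin 2) ℤ}
    (hmul : ∀ A B, μ (A * B) = μ A * μ B) (hdiag : ∀ d, μ (diagonal d) = diagonal d) :
    entryScale μ = of 1 ∨
      entryScale μ = of (fun i j => ![(-1 : ℤ), 1] i * ![(-1 : ℤ), 1] j) := by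
  have h := entryScale_mul_entryScale hmul hdiag 0 1 0
  rw [entryScale_apply_self hdiag] at h
  rcases Int.eq_one_or_neg_one_of_mul_eq_one' h with ⟨h01, h10⟩ | ⟨h01, h10⟩
  · left
    ext i j
    fin_cases i <;> fin_cases j <;> simp [entryScale_apply_self hdiag, h01, h10]
  · right
    ext i j
    fin_cases i <;> fin_cases j <;> simp [entryScale_apply_self hdiag, h01, h10]

end Matrix

theorem stmt12 (μ : Matrix (Fin 2) (Fin 2) ℤ → Matrix (Fin 2) (Fin 2) ℤ)
    (hmul : ∀ A B : Matrix (Fin 2) (Fin 2) ℤ, μ (A * B) = μ A * μ B)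
    (hdiag : ∀ d : Fin 2 → ℤ, μ (Matrix.diagonal d) = Matrix.diagonal d) :
    (∀ A : Matrix (Fin 2) (Fin 2) ℤ, μ A = A) ∨
      (∀ A : Matrix (Fin 2) (Fin 2) ℤ,
        μ A = Matrix.diagonal ![(-1 : ℤ), 1] * A * Matrix.diagonal ![(-1 : ℤ), 1]) := by
  rcases entryScale_fin_two hmul hdiag with h | h
  · exact Or.inl fun A => by
      rw [eq_hadamard_entryScale hmul hdiag, h, hadamard_of_one]
  · exact Or.inr fun A => by
      rw [eq_hadamard_entryScale hmul hdiag, h, hadamard_of_mul_eq_diagonal_mul_mul_diagonal]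
end

section
/- Let μ : M₃(ℤ) → M₃(ℤ) be a map such that μ(AB) = μ(A)μ(B) for all A, B ∈ M₃(ℤ) and μ(diag(a,b,c)) = diag(bc, ac, ab) for all a, b, c ∈ ℤ. Then there exists a diagonal matrix W, equal to one of diag(1,1,1), diag(1,1,−1), diag(−1,1,1), diag(−1,1,−1), such that μ(A) = W · cof(A) · W for all A ∈ M₃(ℤ), where cof(A) denotes the matrix of cofactors of A, i.e. the transpose of the adjugate of A. -/
/-!
Both `μ` and `A ↦ W * cof A * W` are multiplicative, so it suffices to compare them on a
generating set of the monoid `M₃(ℤ)`: diagonal matrices and transvections `1 + t E_ij`. Generation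
holds because Euclid's algorithm, run by row operations, makes every integer matrix upper
triangular, and an upper triangular matrix is a product of diagonal matrices and transvections.

On transvections, the relations `D * (1 + s d_j E_ij) = (1 + s d_i E_ij) * D` with `D` diagonal
(possibly singular) are carried by `μ` to relations with the diagonal matrices `cof D`, and they
force `μ (1 + t E_ij) = 1 + t c_ij E_ji` for a scalar `c_ij`. Applying `μ` to two more relations,
one with singular diagonals and the commutator `[1 + E_ij, 1 + E_jk] = 1 + E_ik`, gives
`c_ij c_ji = 1` and `c_ik = -c_ij c_jk`. Hence `c_ij = -w_i w_j` for a sign vector `w` whose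
middle entry is `1`, and `W = diag w` is the required matrix.
-/

/-- The matrix of cofactors of `A`, i.e. the transpose of the adjugate of `A`. -/
def cof {R : Type*} [CommRing R] {n : ℕ} (A : Matrix (Fin n) (Fin n) R) :
    Matrix (Fin n) (Fin n) R :=
  Matrix.transpose (Matrix.adjugate A)

open Matrix

section Generation

def Matrix.diagonalsAndTransvections (n R : Type*) [Fintype n] [DecidableEq n] [CommRing R] :
    Set (Matrix n n R) :=
  Set.range diagonal ∪ {A | ∃ i j t, i ≠ j ∧ transvection i j t = A}

variable {n : Type*} [Fintype n] [DecidableEq n]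

theorem Int.natAbs_emod_lt (x : ℤ) {y : ℤ} (hy : y ≠ 0) : (x % y).natAbs < y.natAbs := by
  have h₀ := Int.emod_nonneg x hy
  have h₁ := Int.emod_lt_abs x hy
  rw [Int.abs_eq_natAbs] at h₁
  omega

theorem Matrix.mem_of_transvection_mul_mem {R : Type*} [CommRing R]
    {M : Submonoid (Matrix n n R)} (hM : ∀ i j (t : R), i ≠ j → transvection i j t ∈ M)
    {i j : n} (hij : i ≠ j) (t : R) {A : Matrix n n R} (h : transvection i j t * A ∈ M) :
    A ∈ M := by
  have := mul_mem (hM i j (-t) hij) h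
  rwa [← mul_assoc, transvection_mul_transvection_same i j hij, neg_add_cancel,
    transvection_zero, one_mul] at this

/-- Euclid's algorithm on the entries `(i, c)` and `(j, c)`, run by row operations between the
rows `i` and `j` (which preserve `P`). -/
theorem Matrix.mem_of_forall_mem_of_apply_eq_zero {M : Submonoid (Matrix n n ℤ)}
    (hM : ∀ i j (t : ℤ), i ≠ j → transvection i j t ∈ M) {i j : n} (hij : i ≠ j) (c : n)
    {P : Matrix n n ℤ → Prop}
    (hP : ∀ A t, P A → P (transvection i j t * A) ∧ P (transvection j i t * A))
    (h : ∀ B, P B → B j c = 0 → B ∈ M) (A : Matrix n n ℤ) (hA : P A) : A ∈ M := by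
  induction hN : (A i c).natAbs + (A j c).natAbs using Nat.strong_induction_on generalizing A with
  | _ N ih =>
  by_cases hj : A j c = 0
  · exact h A hA hj
  by_cases hi : A i c = 0
  · refine mem_of_transvection_mul_mem hM hij 1 (mem_of_transvection_mul_mem hM hij.symm (-1) ?_)
    refine h _ (hP _ _ (hP _ _ hA).1).2 ?_
    simp [transvection_mul_apply_of_ne _ _ _ _ hij.symm, hi]
  rcases le_or_gt (A i c).natAbs (A j c).natAbs with hle | hlt
  · refine mem_of_transvection_mul_mem hM hij.symm _ (ih _ ?_ _ (hP _ (-(A j c / A i c)) hA).2 rfl)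
    have hjc : (transvection j i (-(A j c / A i c)) * A) j c = A j c % A i c := by
      rw [transvection_mul_apply_same, Int.emod_def]; ring
    rw [transvection_mul_apply_of_ne _ _ _ _ hij, hjc]
    have := Int.natAbs_emod_lt (A j c) hi
    omega
  · refine mem_of_transvection_mul_mem hM hij _ (ih _ ?_ _ (hP _ (-(A i c / A j c)) hA).1 rfl)
    have hic : (transvection i j (-(A i c / A j c)) * A) i c = A i c % A j c := by
      rw [transvection_mul_apply_same, Int.emod_def]; ring
    rw [transvection_mul_apply_of_ne _ _ _ _ hij.symm, hic]
    have := Int.natAbs_emod_lt (A i c) hj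
    omega

theorem Matrix.upperTriangular_fin_three_eq_prod (a b c d e f : ℤ) :
    !![a, b, c; 0, d, e; 0, 0, f] = diagonal ![1, 1, f] * transvection 1 2 e *
      diagonal ![1, d, 1] * (transvection 0 1 b * transvection 0 2 c) * diagonal ![a, 1, 1] := by
  ext p q
  fin_cases p <;> fin_cases q <;> simp [mul_apply, Fin.sum_univ_three, transvection, single_apply]

theorem Matrix.closure_diagonalsAndTransvections_fin_three :
    Submonoid.closure (diagonalsAndTransvections (Fin 3) ℤ) = ⊤ := by
  set M := Submonoid.closure (diagonalsAndTransvections (Fin 3) ℤ)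
  have hD : ∀ d, diagonal d ∈ M := fun d => Submonoid.subset_closure (Or.inl ⟨d, rfl⟩)
  have hM : ∀ i j (t : ℤ), i ≠ j → transvection i j t ∈ M :=
    fun i j t hij => Submonoid.subset_closure (Or.inr ⟨i, j, t, hij, rfl⟩)
  have upper : ∀ A : Matrix (Fin 3) (Fin 3) ℤ, A 1 0 = 0 → A 2 0 = 0 → A 2 1 = 0 → A ∈ M := by
    intro A h10 h20 h21
    rw [eta_fin_three A, h10, h20, h21, upperTriangular_fin_three_eq_prod]
    exact mul_mem (mul_mem (mul_mem (mul_mem (hD _) (hM _ _ _ (by decide))) (hD _))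
      (mul_mem (hM _ _ _ (by decide)) (hM _ _ _ (by decide)))) (hD _)
  have first_column : ∀ A : Matrix (Fin 3) (Fin 3) ℤ, A 1 0 = 0 → A 2 0 = 0 → A ∈ M := by
    intro A h10 h20
    refine mem_of_forall_mem_of_apply_eq_zero hM (i := 1) (j := 2) (by decide) 1
      (P := fun B => B 1 0 = 0 ∧ B 2 0 = 0) ?_ (fun B hB h21 => upper B hB.1 hB.2 h21) A
      ⟨h10, h20⟩
    rintro B t ⟨h10, h20⟩
    simp [h10, h20]
  have first_entry : ∀ A : Matrix (Fin 3) (Fin 3) ℤ, A 1 0 = 0 → A ∈ M := by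
    refine mem_of_forall_mem_of_apply_eq_zero hM (i := 0) (j := 2) (by decide) 0
      (P := fun B => B 1 0 = 0) ?_ first_column
    intro B t h10
    simp [h10]
  refine eq_top_iff.2 fun A _ => ?_
  exact mem_of_forall_mem_of_apply_eq_zero hM (i := 0) (j := 1) (by decide) 0 (P := fun _ => True)
    (fun _ _ _ => ⟨trivial, trivial⟩) (fun B _ h10 => first_entry B h10) A trivial

end Generation

section Relations

variable {n R : Type*} [DecidableEq n] [CommRing R]

theorem Matrix.one_sub_single_eq_diagonal (j : n) :
    (1 : Matrix n n R) - single j j 1 = diagonal (Pi.mulSingle j 0) := by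
  rw [← diagonal_one, ← diagonal_single, diagonal_sub]
  congr 1
  funext p
  rcases eq_or_ne p j with rfl | hp <;> simp [*]

variable [Fintype n]

theorem Matrix.diagonal_mul_transvection (d : n → R) (i j : n) (s : R) :
    diagonal d * transvection i j (s * d j) = transvection i j (s * d i) * diagonal d := by
  ext p q
  simp only [diagonal_mul, mul_diagonal, transvection, Matrix.add_apply, single_apply, one_apply]
  split_ifs <;> subst_vars <;> simp_all <;> ring

theorem Matrix.diagonal_mul_transvection_mul_diagonal {w : n → R} (hw : ∀ p, w p * w p = 1)
    (i j : n) (s : R) :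
    diagonal w * transvection i j s * diagonal w = transvection i j (w i * s * w j) := by
  ext p q
  simp only [diagonal_mul, mul_diagonal, transvection, Matrix.add_apply, single_apply, one_apply]
  split_ifs <;> subst_vars <;> simp_all
  linear_combination hw _

/-- Both sides equal `1 + E_ij + E_ji`. -/
theorem Matrix.transvection_mul_one_sub_single_mul_transvection {i j : n} (hij : i ≠ j) :
    transvection j i (1 : R) * (1 - single j j 1) * transvection i j 1 =
      transvection i j 1 * (1 - single i i 1) * transvection j i 1 := by
  simp [transvection, mul_add, add_mul, mul_sub, sub_mul, hij, hij.symm, single_mul_single_of_ne]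
  abel

theorem Matrix.transvection_commutator {i j k : n} (hij : i ≠ j) (hik : i ≠ k) (hjk : j ≠ k)
    (a b : R) :
    transvection i j a * transvection j k b * transvection i j (-a) * transvection j k (-b) =
      transvection i k (a * b) := by
  simp [transvection, mul_add, add_mul, hij.symm, hik.symm, hjk.symm, single_mul_single_of_ne,
    ← single_neg]
  abel

end Relations

section Cofactor

variable {m : ℕ} {R : Type*} [CommRing R]

theorem cof_one : cof (1 : Matrix (Fin m) (Fin m) R) = 1 := by simp [cof]

theorem cof_mul (A B : Matrix (Fin m) (Fin m) R) : cof (A * B) = cof A * cof B := by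
  simp [cof, adjugate_mul_distrib]

def cofHom : Matrix (Fin m) (Fin m) R →* Matrix (Fin m) (Fin m) R where
  toFun := cof
  map_one' := cof_one
  map_mul' := cof_mul

theorem cof_diagonal (d : Fin m → R) :
    cof (diagonal d) = diagonal fun p => ∏ q ∈ Finset.univ.erase p, d q := by
  rw [cof, adjugate_diagonal, diagonal_transpose]

theorem cof_diagonal_fin_three (a b c : R) :
    cof (diagonal ![a, b, c]) = diagonal ![b * c, a * c, a * b] := by
  have h0 : Finset.univ.erase (0 : Fin 3) = {1, 2} := by decide
  have h1 : Finset.univ.erase (1 : Fin 3) = {0, 2} := by decide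
  have h2 : Finset.univ.erase (2 : Fin 3) = {0, 1} := by decide
  rw [cof_diagonal]
  congr 1
  funext p
  fin_cases p <;> simp [h0, h1, h2]

theorem cof_one_sub_single (j : Fin m) : cof (1 - single j j (1 : R)) = single j j 1 := by
  rw [one_sub_single_eq_diagonal, cof_diagonal, ← diagonal_single]
  congr 1
  funext p
  rcases eq_or_ne p j with rfl | hp
  · simp [Finset.prod_pi_mulSingle']
  · simp [Finset.prod_pi_mulSingle', hp, Ne.symm hp]

theorem cof_transvection {i j : Fin m} (hij : i ≠ j) (t : R) :
    cof (transvection i j t) = transvection j i (-t) := by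
  have hadj : adjugate (transvection i j t) = transvection i j (-t) := by
    calc adjugate (transvection i j t)
        = adjugate (transvection i j t) * (transvection i j t * transvection i j (-t)) := by
          rw [transvection_mul_transvection_same i j hij, add_neg_cancel, transvection_zero,
            mul_one]
      _ = transvection i j (-t) := by
          rw [← mul_assoc, adjugate_mul, det_transvection_of_ne i j hij, one_smul, one_mul]
  rw [cof, hadj, transvection, transpose_add, transpose_one, transpose_single, transvection]

end Cofactor

section MapTransvection

variable {m : ℕ} {R : Type*} [CommRing R]
  {f : Matrix (Fin m) (Fin m) R →* Matrix (Fin m) (Fin m) R}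

def transvectionScale (f : Matrix (Fin m) (Fin m) R →* Matrix (Fin m) (Fin m) R) (i j : Fin m) :
    R :=
  f (transvection i j 1) j i

theorem prod_erase_mul_map_transvection_apply (hf : ∀ d, f (diagonal d) = cof (diagonal d))
    (d : Fin m → R) (i j : Fin m) (s : R) (p q : Fin m) :
    (∏ r ∈ Finset.univ.erase p, d r) * f (transvection i j (s * d j)) p q =
      f (transvection i j (s * d i)) p q * ∏ r ∈ Finset.univ.erase q, d r := by
  have h := congrArg f (diagonal_mul_transvection d i j s)
  rw [map_mul, map_mul, hf, cof_diagonal] at h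
  simpa only [diagonal_mul, mul_diagonal] using congrFun (congrFun h p) q

theorem ite_mul_map_transvection_apply (hf : ∀ d, f (diagonal d) = cof (diagonal d))
    (k : Fin m) (a : R) (i j : Fin m) (s : R) (p q : Fin m) :
    (if k = p then 1 else a) * f (transvection i j (s * (Pi.mulSingle k a : Fin m → R) j)) p q =
      f (transvection i j (s * (Pi.mulSingle k a : Fin m → R) i)) p q *
        (if k = q then 1 else a) := by
  have h := prod_erase_mul_map_transvection_apply hf (Pi.mulSingle k a) i j s p q
  simp only [Finset.prod_pi_mulSingle', Finset.mem_erase, Finset.mem_univ, and_true, ne_eq] at h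
  convert h using 2 <;> split_ifs <;> simp_all

theorem map_transvection_apply_fst (hf : ∀ d, f (diagonal d) = cof (diagonal d)) {i j : Fin m}
    (hij : i ≠ j) (t : R) (q : Fin m) : f (transvection i j t) i q = (1 : Matrix _ _ R) i q := by
  have h := ite_mul_map_transvection_apply hf i 0 i j t i q
  rcases eq_or_ne i q with rfl | hq
  · simpa [hij, hij.symm] using h
  · simpa [hij, hij.symm, hq] using h

theorem map_transvection_apply_snd (hf : ∀ d, f (diagonal d) = cof (diagonal d)) {i j : Fin m}
    (hij : i ≠ j) (t : R) (p : Fin m) : f (transvection i j t) p j = (1 : Matrix _ _ R) p j := by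
  have h := (ite_mul_map_transvection_apply hf j 0 i j t p j).symm
  rcases eq_or_ne p j with rfl | hp
  · simpa [hij, hij.symm] using h
  · simpa [hij, hij.symm, hp, Ne.symm hp] using h

theorem map_transvection_apply_of_ne_left (hf : ∀ d, f (diagonal d) = cof (diagonal d))
    {i j k : Fin m} (hki : k ≠ i) (hkj : k ≠ j) (t : R) {q : Fin m} (hqk : q ≠ k) :
    f (transvection i j t) k q = 0 := by
  simpa [hki, hkj, hki.symm, hkj.symm, hqk, hqk.symm] using
    ite_mul_map_transvection_apply hf k 0 i j t k q

theorem map_transvection_apply_of_ne_right (hf : ∀ d, f (diagonal d) = cof (diagonal d))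
    {i j k : Fin m} (hki : k ≠ i) (hkj : k ≠ j) (t : R) {p : Fin m} (hpk : p ≠ k) :
    f (transvection i j t) p k = 0 := by
  simpa [hki, hkj, hki.symm, hkj.symm, hpk, hpk.symm] using
    (ite_mul_map_transvection_apply hf k 0 i j t p k).symm

theorem map_transvection_apply_snd_fst (hf : ∀ d, f (diagonal d) = cof (diagonal d))
    {i j : Fin m} (hij : i ≠ j) (t : R) :
    f (transvection i j t) j i = t * transvectionScale f i j := by
  simpa [transvectionScale, hij, hij.symm] using
    (ite_mul_map_transvection_apply hf i t i j 1 j i).symm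

theorem map_transvection_apply_self_of_ne [IsDomain R] [CharZero R]
    (hf : ∀ d, f (diagonal d) = cof (diagonal d)) {i j k : Fin m} (hij : i ≠ j) (hki : k ≠ i)
    (hkj : k ≠ j) (t : R) : f (transvection i j t) k k = 1 := by
  have scale : ∀ t, t * f (transvection i j 1) k k = f (transvection i j t) k k * t := by
    intro t
    simpa [hij, hij.symm, hki.symm] using ite_mul_map_transvection_apply hf i t i j 1 k k
  have hom : ∀ s t, f (transvection i j s) k k * f (transvection i j t) k k =
      f (transvection i j (s + t)) k k := by
    intro s t
    rw [← transvection_mul_transvection_same i j hij, map_mul, mul_apply,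
      Finset.sum_eq_single k
        (fun q _ hq => by rw [map_transvection_apply_of_ne_left hf hki hkj s hq, zero_mul])
        (by simp)]
  have idem : f (transvection i j 1) k k * f (transvection i j 1) k k =
      f (transvection i j 1) k k := by
    rw [hom, one_add_one_eq_two]
    exact mul_right_cancel₀ two_ne_zero ((scale 2).symm.trans (mul_comm _ _))
  have ne_zero : f (transvection i j 1) k k ≠ 0 := by
    intro h0
    have := hom 1 (-1)
    rw [h0, zero_mul, add_neg_cancel, transvection_zero, map_one, one_apply_eq] at this
    exact zero_ne_one this
  have at_one : f (transvection i j 1) k k = 1 :=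
    mul_right_cancel₀ ne_zero (by rw [idem, one_mul])
  rcases eq_or_ne t 0 with rfl | ht
  · rw [transvection_zero, map_one, one_apply_eq]
  · exact mul_right_cancel₀ ht (by rw [← scale, at_one, one_mul, mul_one])

theorem map_transvection [IsDomain R] [CharZero R] (hf : ∀ d, f (diagonal d) = cof (diagonal d))
    {i j : Fin m} (hij : i ≠ j) (t : R) :
    f (transvection i j t) = transvection j i (t * transvectionScale f i j) := by
  ext p q
  conv_rhs => rw [transvection, Matrix.add_apply, single_apply]
  by_cases hpi : p = i
  · subst hpi
    simp [map_transvection_apply_fst hf hij, hij.symm]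
  by_cases hpj : p = j
  · subst hpj
    by_cases hqi : q = i
    · subst hqi
      simp [map_transvection_apply_snd_fst hf hij, hij.symm]
    by_cases hqj : q = p
    · subst hqj
      simp [map_transvection_apply_snd hf hij, hij]
    · simp [map_transvection_apply_of_ne_right hf hqi hqj t (Ne.symm hqj), Ne.symm hqj,
        Ne.symm hqi]
  · rcases eq_or_ne q p with rfl | hqp
    · simp [map_transvection_apply_self_of_ne hf hij hpi hpj, Ne.symm hpj]
    · simp [map_transvection_apply_of_ne_left hf hpi hpj t hqp, Ne.symm hpj, Ne.symm hqp]

theorem transvectionScale_mul_transvectionScale_swap [IsDomain R] [CharZero R]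
    (hf : ∀ d, f (diagonal d) = cof (diagonal d)) {i j : Fin m} (hij : i ≠ j) :
    transvectionScale f i j * transvectionScale f j i = 1 := by
  have h := congrArg (· i i) (congrArg f (transvection_mul_one_sub_single_mul_transvection hij))
  have hf' : ∀ k, f (1 - single k k 1) = single k k 1 := fun k => by
    rw [one_sub_single_eq_diagonal, hf, ← one_sub_single_eq_diagonal, cof_one_sub_single]
  simp only [map_mul, hf', map_transvection hf hij, map_transvection hf hij.symm, one_mul] at h
  simp only [mul_transvection_apply_same, ne_eq, hij, not_false_eq_true, mul_single_apply_of_ne,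
    mul_single_apply_same, mul_one, zero_add, mul_transvection_apply_of_ne] at h
  simpa [transvection, single_apply, hij, hij.symm, mul_comm] using h

theorem transvectionScale_eq_neg_mul [IsDomain R] [CharZero R]
    (hf : ∀ d, f (diagonal d) = cof (diagonal d)) {i j k : Fin m} (hij : i ≠ j) (hik : i ≠ k)
    (hjk : j ≠ k) :
    transvectionScale f i k = -(transvectionScale f i j * transvectionScale f j k) := by
  have h := congrArg (· k i) (congrArg f (transvection_commutator (R := R) hij hik hjk 1 1))
  simp only [map_mul, map_transvection hf hij, map_transvection hf hjk,
    map_transvection hf hik] at h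
  simp only [one_mul, neg_mul, ne_eq, hij, not_false_eq_true, mul_transvection_apply_of_ne,
    mul_transvection_apply_same, mul_one] at h
  simp only [transvection, Matrix.add_apply, ne_eq, hik.symm, not_false_eq_true, one_apply_ne, hjk,
    and_true, single_apply_of_ne, add_zero, hjk.symm, hij, and_self, one_apply_eq, hik, mul_one,
    zero_add, single_apply_same] at h
  exact h.symm

end MapTransvection

def conjByInvolution {M : Type*} [Monoid M] (W : M) (hW : W * W = 1) : M →* M where
  toFun x := W * x * W
  map_one' := by rw [mul_one, hW]
  map_mul' x y := by
    rw [show W * x * W * (W * y * W) = W * x * (W * W) * y * W by simp only [mul_assoc], hW,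
      mul_one, mul_assoc W x y]

section FinThree

variable {f : Matrix (Fin 3) (Fin 3) ℤ →* Matrix (Fin 3) (Fin 3) ℤ}

theorem transvectionScale_eq_neg_mul_fin_three (hf : ∀ d, f (diagonal d) = cof (diagonal d))
    {i j : Fin 3} (hij : i ≠ j) :
    transvectionScale f i j =
      -(![-transvectionScale f 0 1, 1, -transvectionScale f 1 2] i *
        ![-transvectionScale f 0 1, 1, -transvectionScale f 1 2] j) := by
  have h01 := Int.eq_of_mul_eq_one (transvectionScale_mul_transvectionScale_swap hf
    (show (0 : Fin 3) ≠ 1 by decide))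
  have h12 := Int.eq_of_mul_eq_one (transvectionScale_mul_transvectionScale_swap hf
    (show (1 : Fin 3) ≠ 2 by decide))
  have h02 := Int.eq_of_mul_eq_one (transvectionScale_mul_transvectionScale_swap hf
    (show (0 : Fin 3) ≠ 2 by decide))
  have h012 := transvectionScale_eq_neg_mul hf (i := 0) (j := 1) (k := 2) (by decide) (by decide)
    (by decide)
  fin_cases i <;> fin_cases j <;> simp at hij ⊢ <;> linarith

theorem eq_conj_cof_of_transvectionScale (hf : ∀ d, f (diagonal d) = cof (diagonal d))
    {w : Fin 3 → ℤ} (hw : ∀ p, w p * w p = 1)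
    (hscale : ∀ i j, i ≠ j → transvectionScale f i j = -(w i * w j))
    (A : Matrix (Fin 3) (Fin 3) ℤ) : f A = diagonal w * cof A * diagonal w := by
  have hW : diagonal w * diagonal w = 1 := by
    rw [diagonal_mul_diagonal, ← diagonal_one]
    exact congrArg diagonal (funext hw)
  suffices f = (conjByInvolution (diagonal w) hW).comp cofHom from DFunLike.congr_fun this A
  refine MonoidHom.eq_of_eqOn_denseM closure_diagonalsAndTransvections_fin_three ?_
  rintro _ (⟨d, rfl⟩ | ⟨i, j, t, hij, rfl⟩)
  · simp only [MonoidHom.comp_apply, cofHom, conjByInvolution, MonoidHom.coe_mk, OneHom.coe_mk,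
      hf, cof_diagonal, diagonal_mul_diagonal]
    congr 1
    funext p
    linear_combination (∏ q ∈ Finset.univ.erase p, d q) * (hw p).symm
  · simp only [MonoidHom.comp_apply, cofHom, conjByInvolution, MonoidHom.coe_mk, OneHom.coe_mk,
      map_transvection hf hij, cof_transvection hij, diagonal_mul_transvection_mul_diagonal hw,
      hscale i j hij]
    ring_nf

end FinThree

theorem stmt13 (μ : Matrix (Fin 3) (Fin 3) ℤ → Matrix (Fin 3) (Fin 3) ℤ)
    (hmul : ∀ A B : Matrix (Fin 3) (Fin 3) ℤ, μ (A * B) = μ A * μ B)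
    (hdiag : ∀ a b c : ℤ,
      μ (Matrix.diagonal ![a, b, c]) = Matrix.diagonal ![b * c, a * c, a * b]) :
    ∃ W : Matrix (Fin 3) (Fin 3) ℤ,
      (W = Matrix.diagonal ![1, 1, 1] ∨ W = Matrix.diagonal ![1, 1, -1] ∨
        W = Matrix.diagonal ![-1, 1, 1] ∨ W = Matrix.diagonal ![-1, 1, -1]) ∧
      ∀ A : Matrix (Fin 3) (Fin 3) ℤ, μ A = W * cof A * W := by
  have hμ : ∀ d, μ (diagonal d) = cof (diagonal d) := fun d => by
    have hd : d = ![d 0, d 1, d 2] := by ext p; fin_cases p <;> rfl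
    rw [hd, hdiag, cof_diagonal_fin_three]
  let f : Matrix (Fin 3) (Fin 3) ℤ →* Matrix (Fin 3) (Fin 3) ℤ :=
    { toFun := μ
      map_one' := by simpa [cof_one] using hμ 1
      map_mul' := hmul }
  have unit_scale : ∀ i j : Fin 3, i ≠ j →
      transvectionScale f i j = 1 ∨ transvectionScale f i j = -1 := fun i j hij =>
    Int.eq_one_or_neg_one_of_mul_eq_one (transvectionScale_mul_transvectionScale_swap hμ hij)
  have ha := unit_scale 0 1 (by decide)
  have hb := unit_scale 1 2 (by decide)
  have hw : ∀ p, ![-transvectionScale f 0 1, 1, -transvectionScale f 1 2] p *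
      ![-transvectionScale f 0 1, 1, -transvectionScale f 1 2] p = 1 := by
    intro p
    fin_cases p <;> rcases ha with ha | ha <;> rcases hb with hb | hb <;> simp [ha, hb]
  refine ⟨_, ?_, eq_conj_cof_of_transvectionScale hμ hw
    (fun i j hij => transvectionScale_eq_neg_mul_fin_three hμ hij)⟩
  rcases ha with ha | ha <;> rcases hb with hb | hb <;> simp [ha, hb]
end

section
/- Let μ : M₃(ℤ) → M₃(ℤ) be a map such that μ(AB) = μ(A)μ(B) for all A, B ∈ M₃(ℤ) and μ(D) = D for every diagonal matrix D ∈ M₃(ℤ). Then there exists a diagonal matrix W, equal to one of diag(1,1,1), diag(1,1,−1), diag(−1,1,1), diag(−1,1,−1), such that μ(A) = WAW for all A ∈ M₃(ℤ). -/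
/-!
Sandwiching between the diagonal idempotents `E i i` isolates entries: `E i i * A * E j j` is
the matrix unit `E i j` scaled by `A i j`. Since `μ` is multiplicative and fixes these
idempotents, it follows that `μ` multiplies the `(i, j)` entry of every matrix by the constant
`c i j := μ (E i j) i j`. From `E i j * E j k = E i k` and `μ (E i i) = E i i` we get the cocycle
rule `c i j * c j k = c i k` with `c i i = 1`; over `ℤ` this forces every `c i j` to be a sign
and `c i j = w i * w j` with `w i := c i k` for a fixed index `k`, i.e. `μ A = W * A * W` for
`W = diagonal w`.
-/

open Matrix

variable {n R : Type*} [DecidableEq n]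

def singleScale [Zero R] [One R] (μ : Matrix n n R → Matrix n n R) : Matrix n n R :=
  of fun i j => μ (single i j 1) i j

section Semiring

variable [Semiring R] {μ : Matrix n n R → Matrix n n R}

theorem map_single_same_of_map_diagonal (hdiag : ∀ d, μ (diagonal d) = diagonal d)
    (i : n) (a : R) : μ (single i i a) = single i i a := by
  rw [← diagonal_single, hdiag]

theorem singleScale_self (hdiag : ∀ d, μ (diagonal d) = diagonal d) (i : n) :
    singleScale μ i i = 1 := by
  simp [singleScale, map_single_same_of_map_diagonal hdiag]

variable [Fintype n]

theorem single_map_apply_eq_map_single (hmul : ∀ A B, μ (A * B) = μ A * μ B)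
    (hdiag : ∀ d, μ (diagonal d) = diagonal d) (A : Matrix n n R) (i j : n) :
    single i j (μ A i j) = μ (single i j (A i j)) :=
  calc single i j (μ A i j) = single i i 1 * μ A * single j j 1 := by simp
    _ = μ (single i i 1 * A * single j j 1) := by
      rw [hmul, hmul, map_single_same_of_map_diagonal hdiag,
        map_single_same_of_map_diagonal hdiag]
    _ = μ (single i j (A i j)) := by simp

theorem map_eq_singleScale_hadamard (hmul : ∀ A B, μ (A * B) = μ A * μ B)
    (hdiag : ∀ d, μ (diagonal d) = diagonal d) (A : Matrix n n R) :
    μ A = singleScale μ ⊙ A := by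
  ext i j
  have hsingle : single i j (A i j) = single i j 1 * single j j (A i j) := by simp
  calc μ A i j = μ (single i j (A i j)) i j := by
        rw [← single_map_apply_eq_map_single hmul hdiag, single_apply_same]
    _ = singleScale μ i j * A i j := by
      rw [hsingle, hmul, map_single_same_of_map_diagonal hdiag, mul_single_apply_same,
        singleScale, of_apply]

theorem map_single_one (hmul : ∀ A B, μ (A * B) = μ A * μ B)
    (hdiag : ∀ d, μ (diagonal d) = diagonal d) (i j : n) :
    μ (single i j 1) = single i j (singleScale μ i j) := by
  rw [map_eq_singleScale_hadamard hmul hdiag]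
  ext a b
  by_cases h : i = a ∧ j = b
  · obtain ⟨rfl, rfl⟩ := h
    simp
  · simp [single_apply_of_ne _ _ _ _ _ h]

theorem singleScale_mul_singleScale (hmul : ∀ A B, μ (A * B) = μ A * μ B)
    (hdiag : ∀ d, μ (diagonal d) = diagonal d) (i j k : n) :
    singleScale μ i j * singleScale μ j k = singleScale μ i k := by
  have h := congr_fun₂ (hmul (single i j 1) (single j k 1)) i k
  simp only [single_mul_single_same, mul_one, map_single_one hmul hdiag, single_apply_same] at h
  exact h.symm

end Semiring

theorem exists_sign_diagonal_conj [Fintype n] {μ : Matrix n n ℤ → Matrix n n ℤ}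
    (hmul : ∀ A B, μ (A * B) = μ A * μ B) (hdiag : ∀ d, μ (diagonal d) = diagonal d) (k : n) :
    ∃ w : n → ℤ, w k = 1 ∧ (∀ i, w i = 1 ∨ w i = -1) ∧
      ∀ A, μ A = diagonal w * A * diagonal w := by
  have hinv (i j : n) : singleScale μ i j * singleScale μ j i = 1 := by
    rw [singleScale_mul_singleScale hmul hdiag, singleScale_self hdiag]
  have hfactor (i j : n) : singleScale μ i j = singleScale μ i k * singleScale μ j k := by
    rw [← Int.eq_of_mul_eq_one (hinv k j), singleScale_mul_singleScale hmul hdiag]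
  refine ⟨fun i => singleScale μ i k, singleScale_self hdiag k,
    fun i => Int.eq_one_or_neg_one_of_mul_eq_one (hinv i k), fun A => ?_⟩
  ext i j
  rw [map_eq_singleScale_hadamard hmul hdiag, hadamard_apply, mul_diagonal, diagonal_mul,
    hfactor i j]
  ring

theorem stmt14 (μ : Matrix (Fin 3) (Fin 3) ℤ → Matrix (Fin 3) (Fin 3) ℤ)
    (hmul : ∀ A B : Matrix (Fin 3) (Fin 3) ℤ, μ (A * B) = μ A * μ B)
    (hdiag : ∀ d : Fin 3 → ℤ, μ (Matrix.diagonal d) = Matrix.diagonal d) :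
    ∃ W : Matrix (Fin 3) (Fin 3) ℤ,
      (W = Matrix.diagonal ![1, 1, 1] ∨ W = Matrix.diagonal ![1, 1, -1] ∨
        W = Matrix.diagonal ![-1, 1, 1] ∨ W = Matrix.diagonal ![-1, 1, -1]) ∧
      ∀ A : Matrix (Fin 3) (Fin 3) ℤ, μ A = W * A * W := by
  obtain ⟨w, hw1, hsign, hconj⟩ := exists_sign_diagonal_conj hmul hdiag 1
  refine ⟨diagonal w, ?_, hconj⟩
  have hw : w = ![w 0, 1, w 2] := by
    ext i; fin_cases i <;> simp [hw1]
  rw [hw]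
  rcases hsign 0 with h0 | h0 <;> rcases hsign 2 with h2 | h2 <;> simp [h0, h2]
end

section
/- Let μ : M₃(ℤ) → M₄(ℤ) be a map such that μ(AB) = μ(A)μ(B) for all A, B ∈ M₃(ℤ) and μ(diag(a,b,c)) = diag(abc, a, b, c) for all a, b, c ∈ ℤ. Then there exists a diagonal matrix W ∈ M₃(ℤ) with all diagonal entries in {1, −1} such that for every A ∈ M₃(ℤ), μ(A) is the block diagonal matrix with 1 × 1 block (det A) and 3 × 3 block W·A·W. -/
/-!
Since `μ` is multiplicative and `μ 1 = 1`, it is a monoid homomorphism. Sandwiching `A` between the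
idempotents `E_ii` and `E_jj` gives `μ(A)_{i+1,j+1} = ε_ij A_ij`, where `ε_ij = μ(E_ij)_{i+1,j+1}`
satisfies `ε_ii = 1` and `ε_ij ε_jk = ε_ik`; hence `ε_ij = d_i d_j` for a sign vector `d`.

For a transvection `T(t) = 1 + t E_ij`, the first row and column of `μ(T(t))` vanish off the corner:
at positions other than `(0, j+1)` and `(i+1, 0)` because `T(t) E_kk = E_kk` for `k ≠ j` and
`E_kk T(t) = E_kk` for `k ≠ i`, and at those two positions by applying `μ` to `D T(t) = T(2t) D`,
`D = diag(2 at i)`, and to `T(t) D' = D' T(2t)`, `D' = diag(2 at j)`. The same relations give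
`c(2t) = c(t)` for the corner entry `c(t)`, while `c(2t) = c(t)²` and `c(t) c(-t) = 1`, so
`c(t) = 1`.

Thus `μ` agrees with `A ↦ diag(det A, W A W)`, `W = diag d`, on transvections and on diagonal
matrices, and by Euclid's algorithm on rows and columns these generate the multiplicative monoid of
integer matrices.
-/

/-- The `4 × 4` block diagonal matrix whose `(1,1)` entry is `d`, whose lower-right
`3 × 3` block is `B`, and whose remaining entries are `0`. -/
def blockDiag1 (d : ℤ) (B : Matrix (Fin 3) (Fin 3) ℤ) : Matrix (Fin 4) (Fin 4) ℤ :=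
  Matrix.reindex finSumFinEquiv finSumFinEquiv
    (Matrix.fromBlocks (Matrix.diagonal (fun _ : Fin 1 => d)) 0 0 B)

open Matrix Finset

lemma Int.natAbs_emod_lt_s16 (a : ℤ) {b : ℤ} (hb : b ≠ 0) : (a % b).natAbs < b.natAbs := by
  have := Int.emod_nonneg a hb
  have := Int.emod_lt a hb
  omega

lemma Fin.cons_one_one {n : ℕ} {α : Type*} [One α] : (Fin.cons 1 1 : Fin (n + 1) → α) = 1 := by
  ext i; exact i.cases rfl (by simp)

section Cocycle

variable {ι : Type*} {ε : ι → ι → ℤ} (hself : ∀ i, ε i i = 1)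
  (hmul : ∀ i j k, ε i j * ε j k = ε i k)
include hself hmul

lemma eq_one_or_neg_one_of_cocycle (i j : ι) : ε i j = 1 ∨ ε i j = -1 :=
  Int.eq_one_or_neg_one_of_mul_eq_one ((hmul i j i).trans (hself i))

lemma eq_mul_of_cocycle (i₀ i j : ι) : ε i j = ε i₀ i * ε i₀ j := by
  rw [← hmul i i₀ j, Int.eq_of_mul_eq_one ((hmul i i₀ i).trans (hself i))]

end Cocycle

namespace Matrix

section Identities

variable {n R : Type*} [Fintype n] [DecidableEq n]

lemma diagonal_mul_single [NonUnitalNonAssocSemiring R] (d : n → R) (i j : n) (c : R) :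
    diagonal d * single i j c = single i j (d i * c) := by
  ext k l
  by_cases hk : i = k <;> simp [diagonal_mul, single_apply, hk]

lemma single_mul_diagonal [NonUnitalNonAssocSemiring R] (d : n → R) (i j : n) (c : R) :
    single i j c * diagonal d = single i j (c * d j) := by
  ext k l
  by_cases hl : j = l <;> simp [mul_diagonal, single_apply, hl]

lemma mul_apply_zero_zero_of_row {m : ℕ} [NonUnitalNonAssocSemiring R]
    {M : Matrix (Fin (m + 1)) (Fin (m + 1)) R} (hM : ∀ k : Fin m, M 0 k.succ = 0)
    (N : Matrix (Fin (m + 1)) (Fin (m + 1)) R) : (M * N) 0 0 = M 0 0 * N 0 0 := by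
  simp [mul_apply, Fin.sum_univ_succ, hM]

variable [CommRing R] {i j : n}

lemma transvection_swap_mul_apply (hij : i ≠ j) (A : Matrix n n R) (k : n) :
    (transvection i j 1 * (transvection j i (-1) * (transvection i j 1 * A)) : Matrix n n R) i k =
      A j k := by
  simp [hij, hij.symm]

lemma diagonal_mulSingle_mul_transvection (hij : i ≠ j) (a t : R) :
    diagonal (Pi.mulSingle i a) * transvection i j t =
      transvection i j (a * t) * diagonal (Pi.mulSingle i a) := by
  simp [transvection, Matrix.mul_add, Matrix.add_mul, diagonal_mul_single, single_mul_diagonal,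
    Pi.mulSingle_eq_of_ne hij.symm]

lemma transvection_mul_diagonal_mulSingle (hij : i ≠ j) (a t : R) :
    transvection i j t * diagonal (Pi.mulSingle j a) =
      diagonal (Pi.mulSingle j a) * transvection i j (t * a) := by
  simp [transvection, Matrix.mul_add, Matrix.add_mul, diagonal_mul_single, single_mul_diagonal,
    Pi.mulSingle_eq_of_ne hij, mul_comm]

end Identities

section Generation

variable {n : Type*}

def IsDiagOutside (s : Finset n) (A : Matrix n n ℤ) : Prop :=
  ∀ i j, i ≠ j → A i j ≠ 0 → i ∈ s ∧ j ∈ s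

lemma IsDiagOutside.transpose {s : Finset n} {A : Matrix n n ℤ} (hA : IsDiagOutside s A) :
    IsDiagOutside s Aᵀ :=
  fun i j hij h => (hA j i hij.symm h).symm

variable [DecidableEq n]

lemma IsDiagOutside.eq_diagonal {A : Matrix n n ℤ} (hA : IsDiagOutside ∅ A) :
    A = diagonal fun i => A i i := by
  ext i j
  by_cases hij : i = j
  · simp [hij]
  · by_contra h
    simpa using hA i j hij (by simpa [hij] using h)

lemma IsDiagOutside.of_insert {s : Finset n} {A : Matrix n n ℤ} {p : n}
    (hA : IsDiagOutside (insert p s) A) (hp : ∀ j ≠ p, A j p = 0 ∧ A p j = 0) :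
    IsDiagOutside s A := by
  intro i j hij h
  obtain ⟨hi, hj⟩ := hA i j hij h
  refine ⟨(mem_insert.1 hi).resolve_left ?_, (mem_insert.1 hj).resolve_left ?_⟩
  · rintro rfl; exact h (hp j (Ne.symm hij)).2
  · rintro rfl; exact h (hp i hij).1

variable [Fintype n]

lemma IsDiagOutside.transvection_mul {s : Finset n} {A : Matrix n n ℤ} (hA : IsDiagOutside s A)
    {i j : n} (hi : i ∈ s) (hj : j ∈ s) (t : ℤ) : IsDiagOutside s (transvection i j t * A) := by
  intro a b hab h
  by_cases ha : a = i
  · subst ha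
    refine ⟨hi, ?_⟩
    rw [transvection_mul_apply_same] at h
    by_cases hjb : j = b
    · exact hjb ▸ hj
    by_cases hab' : A a b = 0
    · exact (hA j b hjb (by simp_all)).2
    · exact (hA a b hab hab').2
  · exact hA a b hab (by simpa [ha] using h)

def offDiagCount (p : n) (A : Matrix n n ℤ) : ℕ :=
  #{j | j ≠ p ∧ A j p ≠ 0} + #{j | j ≠ p ∧ A p j ≠ 0}

lemma offDiagCount_transpose (p : n) (A : Matrix n n ℤ) : offDiagCount p Aᵀ = offDiagCount p A :=
  add_comm _ _

lemma offDiagCount_transvection_mul_lt {p j : n} (hjp : j ≠ p) {A : Matrix n n ℤ} {t : ℤ}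
    (hj : A j p ≠ 0) (hj' : (transvection j p t * A) j p = 0) :
    offDiagCount p (transvection j p t * A) < offDiagCount p A := by
  have hrow : ∀ k, (transvection j p t * A) p k = A p k := by simp [hjp.symm]
  refine Nat.add_lt_add_of_lt_of_le (card_lt_card ?_) (le_of_eq ?_)
  · refine (ssubset_iff_of_subset ?_).2 ⟨j, by simp [hjp, hj], by simp [hj']⟩
    intro k hk
    simp only [mem_filter, mem_univ, true_and] at hk ⊢
    refine ⟨hk.1, ?_⟩
    by_cases hkj : k = j
    · exact hkj ▸ hj
    · simpa [hkj] using hk.2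
  · simp only [hrow]

variable (n) in
def transvectionsAndDiagonals : Set (Matrix n n ℤ) :=
  {A | ∃ i j t, i ≠ j ∧ transvection i j t = A} ∪ Set.range diagonal

local notation "𝓔" => Submonoid.closure (transvectionsAndDiagonals _)

lemma transvection_mem_closure {i j : n} (hij : i ≠ j) (t : ℤ) : transvection i j t ∈ 𝓔 :=
  Submonoid.subset_closure (Or.inl ⟨i, j, t, hij, rfl⟩)

lemma diagonal_mem_closure (v : n → ℤ) : diagonal v ∈ 𝓔 :=
  Submonoid.subset_closure (Or.inr ⟨v, rfl⟩)

lemma mem_closure_of_transvection_mul_mem {i j : n} (hij : i ≠ j) {t : ℤ} {A : Matrix n n ℤ}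
    (h : transvection i j t * A ∈ 𝓔) : A ∈ 𝓔 := by
  simpa [← Matrix.mul_assoc, transvection_mul_transvection_same _ _ hij] using
    mul_mem (transvection_mem_closure hij (-t)) h

lemma transpose_mem_closure {A : Matrix n n ℤ} (h : A ∈ 𝓔) : Aᵀ ∈ 𝓔 := by
  induction h using Submonoid.closure_induction with
  | mem A hA =>
    rcases hA with ⟨i, j, t, hij, rfl⟩ | ⟨v, rfl⟩
    · simpa [transvection, transpose_single] using transvection_mem_closure hij.symm t
    · simpa using diagonal_mem_closure v
  | one => simp
  | mul A B _ _ hA hB => simpa using mul_mem hB hA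

theorem mem_closure_of_isDiagOutside_insert_of_ne_zero {p : n} {s : Finset n}
    (h : ∀ B, IsDiagOutside s B → B ∈ 𝓔) (A : Matrix n n ℤ) (hA : IsDiagOutside (insert p s) A)
    (hpp : A p p ≠ 0) : A ∈ 𝓔 := by
  induction hm : (A p p).natAbs using Nat.strong_induction_on generalizing A with
  | _ m ihm =>
  induction hc : offDiagCount p A using Nat.strong_induction_on generalizing A with
  | _ c ihc =>
  by_cases hline : ∃ j ≠ p, A j p ≠ 0 ∨ A p j ≠ 0
  swap
  · push Not at hline
    exact h A (hA.of_insert hline)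
  wlog hcol : ∃ j ≠ p, A j p ≠ 0 generalizing A
  · obtain ⟨j, hjp, hj⟩ := hline
    have hrow : A p j ≠ 0 := hj.resolve_left fun h' => hcol ⟨j, hjp, h'⟩
    simpa using transpose_mem_closure <| this Aᵀ hA.transpose hpp hm
      ((offDiagCount_transpose p A).trans hc) ⟨j, hjp, .inl hrow⟩ ⟨j, hjp, hrow⟩
  obtain ⟨j, hjp, hj⟩ := hcol
  have hjs : j ∈ insert p s := (hA j p hjp hj).1
  have hps := mem_insert_self p s
  have hrem : (transvection j p (-(A j p / A p p)) * A) j p = A j p % A p p := by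
    simp [Int.emod_def]
    ring
  by_cases hr : A j p % A p p = 0
  · apply mem_closure_of_transvection_mul_mem hjp (t := -(A j p / A p p))
    refine ihc _ ?_ _ (hA.transvection_mul hjs hps _) (by simpa [hjp.symm] using hpp)
      (by simpa [hjp.symm] using hm) rfl
    exact hc ▸ offDiagCount_transvection_mul_lt hjp hj (hrem.trans hr)
  · -- the nonzero remainder is swapped into the pivot position, which lowers `|A p p|`
    apply mem_closure_of_transvection_mul_mem hjp (t := -(A j p / A p p))
    apply mem_closure_of_transvection_mul_mem hjp.symm (t := 1)
    apply mem_closure_of_transvection_mul_mem hjp (t := -1)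
    apply mem_closure_of_transvection_mul_mem hjp.symm (t := 1)
    have hBpp := (transvection_swap_mul_apply hjp.symm _ p).trans hrem
    refine ihm _ (hm ▸ hBpp ▸ Int.natAbs_emod_lt_s16 _ hpp) _ ?_ (hBpp ▸ hr) rfl
    exact (((hA.transvection_mul hjs hps _).transvection_mul hps hjs 1).transvection_mul
      hjs hps (-1)).transvection_mul hps hjs 1

theorem mem_closure_of_isDiagOutside_insert {p : n} {s : Finset n}
    (h : ∀ B, IsDiagOutside s B → B ∈ 𝓔) (A : Matrix n n ℤ) (hA : IsDiagOutside (insert p s) A) :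
    A ∈ 𝓔 := by
  by_cases hpp : A p p = 0
  swap
  · exact mem_closure_of_isDiagOutside_insert_of_ne_zero h A hA hpp
  by_cases hline : ∃ j ≠ p, A j p ≠ 0 ∨ A p j ≠ 0
  swap
  · push Not at hline
    exact h A (hA.of_insert hline)
  obtain ⟨j, hjp, hj⟩ := hline
  have hjs : j ∈ insert p s := by
    rcases hj with hj | hj
    exacts [(hA j p hjp hj).1, (hA p j hjp.symm hj).2]
  have key : ∀ B, IsDiagOutside (insert p s) B → B p p = 0 → B j p ≠ 0 → B ∈ 𝓔 :=
    fun B hB hBpp hBj => mem_closure_of_transvection_mul_mem hjp.symm (t := 1) <|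
      mem_closure_of_isDiagOutside_insert_of_ne_zero h _
        (hB.transvection_mul (mem_insert_self p s) hjs 1) (by simp [hBpp, hBj])
  rcases hj with hj | hj
  · exact key A hA hpp hj
  · simpa using transpose_mem_closure (key Aᵀ hA.transpose hpp hj)

theorem closure_transvectionsAndDiagonals :
    Submonoid.closure (transvectionsAndDiagonals n) = ⊤ := by
  refine eq_top_iff.2 fun A _ => ?_
  suffices ∀ s : Finset n, ∀ A, IsDiagOutside s A → A ∈ 𝓔 from
    this univ A fun i j _ _ => ⟨mem_univ i, mem_univ j⟩
  intro s
  induction s using Finset.induction_on with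
  | empty => intro A hA; rw [hA.eq_diagonal]; exact diagonal_mem_closure _
  | insert p s _ ih => exact mem_closure_of_isDiagOutside_insert ih

end Generation

end Matrix

section BlockDiag1

variable (d : ℤ) (B : Matrix (Fin 3) (Fin 3) ℤ) (i j : Fin 3)

@[simp] lemma blockDiag1_zero_zero : blockDiag1 d B 0 0 = d := rfl
@[simp] lemma blockDiag1_zero_succ : blockDiag1 d B 0 j.succ = 0 := by fin_cases j <;> rfl
@[simp] lemma blockDiag1_succ_zero : blockDiag1 d B i.succ 0 = 0 := by fin_cases i <;> rfl
@[simp] lemma blockDiag1_succ_succ : blockDiag1 d B i.succ j.succ = B i j := by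
  fin_cases i <;> fin_cases j <;> rfl

end BlockDiag1

lemma eq_blockDiag1_iff {M : Matrix (Fin 4) (Fin 4) ℤ} {d : ℤ} {B : Matrix (Fin 3) (Fin 3) ℤ} :
    M = blockDiag1 d B ↔ M 0 0 = d ∧ (∀ j : Fin 3, M 0 j.succ = 0) ∧
      (∀ i : Fin 3, M i.succ 0 = 0) ∧ ∀ i j : Fin 3, M i.succ j.succ = B i j := by
  refine ⟨by rintro rfl; simp, fun ⟨h00, h0s, hs0, hss⟩ => ?_⟩
  ext i j
  cases i using Fin.cases <;> cases j using Fin.cases <;> simp [*]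

lemma blockDiag1_mul (d₁ d₂ : ℤ) (B₁ B₂ : Matrix (Fin 3) (Fin 3) ℤ) :
    blockDiag1 d₁ B₁ * blockDiag1 d₂ B₂ = blockDiag1 (d₁ * d₂) (B₁ * B₂) := by
  simp [blockDiag1, reindex_apply, submatrix_mul_equiv, fromBlocks_multiply]

lemma blockDiag1_diagonal (d : ℤ) (v : Fin 3 → ℤ) :
    blockDiag1 d (diagonal v) = diagonal (Fin.cons d v) := by
  refine (eq_blockDiag1_iff.2 ?_).symm
  refine ⟨rfl, fun j => ?_, fun i => ?_, fun i j => ?_⟩ <;>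
    simp [diagonal_apply, (Fin.succ_ne_zero _).symm]

lemma blockDiag1_one : blockDiag1 1 1 = 1 := by
  simpa [Fin.cons_one_one] using blockDiag1_diagonal 1 1

local notation "M₃" => Matrix (Fin 3) (Fin 3) ℤ
local notation "M₄" => Matrix (Fin 4) (Fin 4) ℤ

def blockDetConj (W : M₃) (hW : W * W = 1) : M₃ →* M₄ where
  toFun A := blockDiag1 A.det (W * A * W)
  map_one' := by rw [det_one, Matrix.mul_one, hW, blockDiag1_one]
  map_mul' A B := by
    rw [blockDiag1_mul, det_mul]
    congr 1
    calc W * (A * B) * W = W * A * (W * W) * B * W := by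
          rw [hW]; simp only [Matrix.mul_one, Matrix.mul_assoc]
      _ = W * A * W * (W * B * W) := by simp only [Matrix.mul_assoc]

def unitEntry (μ : M₃ →* M₄) (i j : Fin 3) : ℤ := μ (single i j 1) i.succ j.succ

section DiagonalCompatible

variable (μ : M₃ →* M₄)
  (hdiag : ∀ v : Fin 3 → ℤ, μ (diagonal v) = diagonal (Fin.cons (∏ i, v i) v))
include hdiag

lemma map_diagonal_mul_apply (v : Fin 3 → ℤ) (A : M₃) (a b : Fin 4) :
    μ (diagonal v * A) a b = (Fin.cons (∏ i, v i) v : Fin 4 → ℤ) a * μ A a b := by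
  rw [map_mul, hdiag, diagonal_mul]

lemma map_mul_diagonal_apply (v : Fin 3 → ℤ) (A : M₃) (a b : Fin 4) :
    μ (A * diagonal v) a b = μ A a b * (Fin.cons (∏ i, v i) v : Fin 4 → ℤ) b := by
  rw [map_mul, hdiag, mul_diagonal]

lemma map_single_self (i : Fin 3) (a : ℤ) : μ (single i i a) = single i.succ i.succ a := by
  rw [← diagonal_single, hdiag, ← diagonal_single]
  congr 1
  ext k
  cases k using Fin.cases
  · fin_cases i <;> simp [Fin.prod_univ_three]
  · simp [Pi.single_apply]

lemma map_single_apply (A : M₃) (i j : Fin 3) :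
    μ (single i j (A i j)) = single i.succ j.succ (μ A i.succ j.succ) := by
  have h := congrArg μ (single_mul_mul_single i i j j 1 A 1)
  simp only [one_mul, mul_one, map_mul, map_single_self μ hdiag] at h
  rw [← h, single_mul_mul_single, one_mul, mul_one]

lemma map_single_one_s16 (i j : Fin 3) :
    μ (single i j 1) = single i.succ j.succ (unitEntry μ i j) := by
  simpa [unitEntry] using map_single_apply μ hdiag (single i j 1) i j

lemma unitEntry_self (i : Fin 3) : unitEntry μ i i = 1 := by
  simp [unitEntry, map_single_self μ hdiag]

lemma unitEntry_mul (i j k : Fin 3) : unitEntry μ i j * unitEntry μ j k = unitEntry μ i k := by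
  have h := congrArg μ (single_mul_single_same (1 : ℤ) i j k 1)
  rw [map_mul, map_single_one_s16 μ hdiag, map_single_one_s16 μ hdiag, single_mul_single_same,
    one_mul] at h
  simpa [unitEntry] using congrFun₂ h i.succ k.succ

lemma map_apply_succ_succ (A : M₃) (i j : Fin 3) :
    μ A i.succ j.succ = unitEntry μ 0 i * A i j * unitEntry μ 0 j := by
  have h := congrArg μ (single_mul_single_same (A i j) i i j 1)
  rw [map_mul, map_single_self μ hdiag, map_single_one_s16 μ hdiag, single_mul_single_same, mul_one,
    map_single_apply μ hdiag] at h
  have h' := congrFun₂ h i.succ j.succ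
  simp only [single_apply_same] at h'
  rw [← h', eq_mul_of_cocycle (unitEntry_self μ hdiag) (unitEntry_mul μ hdiag) 0]
  ring

lemma diagonal_unitEntry_mul_self :
    diagonal (unitEntry μ 0) * diagonal (unitEntry μ 0) = 1 := by
  rw [diagonal_mul_diagonal, ← diagonal_one]
  congr 1
  ext i
  rcases eq_one_or_neg_one_of_cocycle (unitEntry_self μ hdiag) (unitEntry_mul μ hdiag) 0 i
    with h | h <;> simp [h]

section Transvection

variable {i j : Fin 3} (hij : i ≠ j)
include hij

lemma map_transvection_zero_succ (t : ℤ) (k : Fin 3) : μ (transvection i j t) 0 k.succ = 0 := by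
  by_cases hk : k = j
  · subst hk
    have h₁ := congrFun₂ (congrArg μ (diagonal_mulSingle_mul_transvection hij 2 t)) 0 k.succ
    have h₂ := congrFun₂ (congrArg μ (transvection_mul_diagonal_mulSingle hij 2 t)) 0 k.succ
    rw [map_diagonal_mul_apply μ hdiag, map_mul_diagonal_apply μ hdiag] at h₁
    rw [map_mul_diagonal_apply μ hdiag, map_diagonal_mul_apply μ hdiag] at h₂
    simp [Finset.prod_pi_mulSingle', Pi.mulSingle_eq_of_ne hij.symm, mul_comm t] at h₁ h₂
    linarith
  · have h : transvection i j t * single k k 1 = single k k 1 := by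
      simp [transvection, Matrix.add_mul, single_mul_single_of_ne _ _ _ _ (Ne.symm hk)]
    simpa [map_single_self μ hdiag, mul_single_apply_same] using
      congrFun₂ (congrArg μ h) 0 k.succ

lemma map_transvection_succ_zero (t : ℤ) (k : Fin 3) : μ (transvection i j t) k.succ 0 = 0 := by
  by_cases hk : k = i
  · subst hk
    have h₁ := congrFun₂ (congrArg μ (diagonal_mulSingle_mul_transvection hij 2 t)) k.succ 0
    have h₂ := congrFun₂ (congrArg μ (transvection_mul_diagonal_mulSingle hij 2 t)) k.succ 0
    rw [map_diagonal_mul_apply μ hdiag, map_mul_diagonal_apply μ hdiag] at h₁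
    rw [map_mul_diagonal_apply μ hdiag, map_diagonal_mul_apply μ hdiag] at h₂
    simp [Finset.prod_pi_mulSingle', Pi.mulSingle_eq_of_ne hij, mul_comm t] at h₁ h₂
    linarith
  · have h : single k k 1 * transvection i j t = single k k 1 := by
      simp [transvection, Matrix.mul_add, single_mul_single_of_ne _ _ _ _ hk]
    simpa [map_single_self μ hdiag, single_mul_apply_same] using
      congrFun₂ (congrArg μ h) k.succ 0

lemma map_transvection_zero_zero (t : ℤ) : μ (transvection i j t) 0 0 = 1 := by
  have hrow := map_transvection_zero_succ μ hdiag hij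
  have hscale : μ (transvection i j (2 * t)) 0 0 = μ (transvection i j t) 0 0 := by
    have h := congrFun₂ (congrArg μ (diagonal_mulSingle_mul_transvection hij 2 t)) 0 0
    rw [map_diagonal_mul_apply μ hdiag, map_mul_diagonal_apply μ hdiag] at h
    simp [Finset.prod_pi_mulSingle'] at h
    linarith
  have hsq : μ (transvection i j t) 0 0 * μ (transvection i j t) 0 0 =
      μ (transvection i j (2 * t)) 0 0 := by
    rw [← mul_apply_zero_zero_of_row (hrow t), ← map_mul,
      transvection_mul_transvection_same _ _ hij, two_mul]
  have hinv : μ (transvection i j t) 0 0 * μ (transvection i j (-t)) 0 0 = 1 := by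
    rw [← mul_apply_zero_zero_of_row (hrow t), ← map_mul,
      transvection_mul_transvection_same _ _ hij, add_neg_cancel, transvection_zero, map_one,
      one_apply_eq]
  exact mul_left_cancel₀ (left_ne_zero_of_mul_eq_one hinv) (by rw [hsq, hscale, mul_one])

lemma map_transvection_s16 (t : ℤ) :
    μ (transvection i j t) =
      blockDiag1 1 (diagonal (unitEntry μ 0) * transvection i j t * diagonal (unitEntry μ 0)) := by
  refine eq_blockDiag1_iff.2 ⟨map_transvection_zero_zero μ hdiag hij t,
    map_transvection_zero_succ μ hdiag hij t, map_transvection_succ_zero μ hdiag hij t,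
    fun a b => ?_⟩
  rw [map_apply_succ_succ μ hdiag, mul_diagonal, diagonal_mul]

end Transvection

theorem eq_blockDetConj : μ = blockDetConj _ (diagonal_unitEntry_mul_self μ hdiag) := by
  refine MonoidHom.eq_of_eqOn_denseM closure_transvectionsAndDiagonals ?_
  rintro _ (⟨i, j, t, hij, rfl⟩ | ⟨v, rfl⟩)
  · simp [blockDetConj, map_transvection_s16 μ hdiag hij, det_transvection_of_ne _ _ hij]
  · have hcomm : diagonal (unitEntry μ 0) * diagonal v = diagonal v * diagonal (unitEntry μ 0) := by
      simp [diagonal_mul_diagonal, mul_comm]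
    simp only [blockDetConj, MonoidHom.coe_mk, OneHom.coe_mk]
    rw [hcomm, Matrix.mul_assoc, diagonal_unitEntry_mul_self μ hdiag, Matrix.mul_one, det_diagonal,
      blockDiag1_diagonal, hdiag]

end DiagonalCompatible

lemma map_diagonal_eq_cons_prod {μ : M₃ → M₄}
    (hdiag : ∀ a b c : ℤ, μ (diagonal ![a, b, c]) = diagonal ![a * b * c, a, b, c])
    (v : Fin 3 → ℤ) : μ (diagonal v) = diagonal (Fin.cons (∏ i, v i) v) := by
  have hv : v = ![v 0, v 1, v 2] := by ext i; fin_cases i <;> rfl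
  rw [hv, hdiag, Fin.prod_univ_three]
  rfl

theorem stmt16 (μ : Matrix (Fin 3) (Fin 3) ℤ → Matrix (Fin 4) (Fin 4) ℤ)
    (hmul : ∀ A B : Matrix (Fin 3) (Fin 3) ℤ, μ (A * B) = μ A * μ B)
    (hdiag : ∀ a b c : ℤ,
      μ (Matrix.diagonal ![a, b, c]) = Matrix.diagonal ![a * b * c, a, b, c]) :
    ∃ d : Fin 3 → ℤ, (∀ i, d i = 1 ∨ d i = -1) ∧
      ∀ A : Matrix (Fin 3) (Fin 3) ℤ,
        μ A = blockDiag1 A.det (Matrix.diagonal d * A * Matrix.diagonal d) := by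
  have hdiag' := map_diagonal_eq_cons_prod hdiag
  let μ' : M₃ →* M₄ := ⟨⟨μ, by simpa [Fin.cons_one_one] using hdiag' 1⟩, hmul⟩
  refine ⟨unitEntry μ' 0, eq_one_or_neg_one_of_cocycle (unitEntry_self μ' hdiag')
    (unitEntry_mul μ' hdiag') 0, fun A => ?_⟩
  exact DFunLike.congr_fun (eq_blockDetConj μ' hdiag') A
end

section
/- Let H be a compact metrizable abelian topological group, α₀ : H → H a continuous surjective group homomorphism, and h₀ ∈ H. Define the affine map α : H → H by α(h) = h₀ + α₀(h). Then α is exact if and only if α₀ is exact. -/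
/-! Every iterate of `h ↦ h₀ + α₀ h` is a translate of the same iterate of `α₀`, and translating
a set does not change whether it is all of `H`. -/

theorem Equiv.image_eq_univ_iff {X Y : Type*} (e : X ≃ Y) (s : Set X) :
    e '' s = .univ ↔ s = .univ := by
  rw [← e.image_eq_iff_eq s .univ, Set.image_univ_of_surjective e.surjective]

theorem ExactMap.iff_of_iterate_eq_comp_equiv {X : Type*} [TopologicalSpace X] {ψ φ : X → X}
    (h : ∀ n, ∃ e : X ≃ X, ψ^[n] = e ∘ φ^[n]) : ExactMap ψ ↔ ExactMap φ := by
  have himage (n : ℕ) (V : Set X) : ψ^[n] '' V = Set.univ ↔ φ^[n] '' V = Set.univ := by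
    obtain ⟨e, he⟩ := h n
    rw [he, Set.image_comp, e.image_eq_univ_iff]
  exact forall₂_congr fun V _ => imp_congr_right fun _ => exists_congr fun n => himage n V

theorem AddMonoidHom.exists_iterate_add_left_eq {M : Type*} [AddMonoid M] (f : M →+ M) (a : M)
    (n : ℕ) : ∃ c : M, (fun x => a + f x)^[n] = fun x => c + f^[n] x := by
  induction n with
  | zero => exact ⟨0, funext fun x => (zero_add x).symm⟩
  | succ n ih =>
    obtain ⟨c, hc⟩ := ih
    refine ⟨a + f c, funext fun x => ?_⟩
    rw [Function.iterate_succ_apply', Function.iterate_succ_apply', hc, map_add, add_assoc]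

theorem stmt18_general {H : Type*} [AddCommGroup H] [TopologicalSpace H]
    (α₀ : H →+ H) (h₀ : H) :
    ExactMap (fun h : H => h₀ + α₀ h) ↔ ExactMap (α₀ : H → H) := by
  refine ExactMap.iff_of_iterate_eq_comp_equiv fun n => ?_
  obtain ⟨c, hc⟩ := α₀.exists_iterate_add_left_eq h₀ n
  exact ⟨Equiv.addLeft c, hc⟩

theorem stmt18 {H : Type*} [AddCommGroup H] [TopologicalSpace H] [IsTopologicalAddGroup H]
    [CompactSpace H] [TopologicalSpace.MetrizableSpace H]
    (α₀ : H →+ H) (hc : Continuous α₀) (hs : Function.Surjective α₀) (h₀ : H) :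
    ExactMap (fun h : H => h₀ + α₀ h) ↔ ExactMap (α₀ : H → H) :=
  stmt18_general α₀ h₀
end
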